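/- arXiv:2004.06595 — 6 statements merged into one kernel-verified Lean document; each statement's English description precedes it below -/
import Mathlib

section
/- For every graph property Φ and every positive integer k, there exists a unique finitely supported function a from isomorphism classes of finite simple graphs to ℚ such that for every finite simple graph G, #IndSub(Φ,k,G) = Σ_H a(H) · #Hom(H,G), where the sum ranges over all isomorphism classes of finite simple graphs H. -/
/-!
Grouping the `k`-vertex embeddings `Fin k ↪ V` by their image shows `k! · #IndSub(Φ, k, G)` is
the sum of the induced-embedding counts `#(H ↪g G)` over the `k`-vertex graphs `H ⊨ Φ`. By
Möbius inversion over the supergraphs of `H`, each such count is a combination of counts of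
copies (injective homomorphisms). Grouping homomorphisms `H →g G` by their kernel gives
`#Hom(H, G) = ∑ #Copy(H / s, G)` over the setoids `s` whose classes are independent in `H`;
the term `s = ⊥` is `#Copy(H, G)` and the others have fewer vertices, so by induction copy counts
are combinations of hom counts of graphs with at most as many vertices. This gives existence.

For uniqueness, copy counts of pairwise non-isomorphic graphs are linearly independent:
evaluate a vanishing combination at a graph of minimal size (vertices plus edges) in its
support. On graphs with at most `N` vertices the hom counts and the copy counts span the same
space, whose dimension is therefore the number of such classes, so the hom counts are linearly
independent as well.
-/
open SimpleGraph

/-- A graph property: for each number of vertices `n`, a predicate on simple graphs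
with vertex set `Fin n`. -/
abbrev GraphProperty := ∀ n : ℕ, SimpleGraph (Fin n) → Prop

/-- Invariance of a graph property under graph isomorphism. -/
def Invariant (Φ : GraphProperty) : Prop :=
  ∀ (n : ℕ) (G G' : SimpleGraph (Fin n)), Nonempty (G ≃g G') → (Φ n G ↔ Φ n G')

/-- `indSub Φ k G` is the number of `k`-element vertex subsets `S` of `G` such that the
induced subgraph `G[S]` satisfies `Φ`. -/
noncomputable def indSub (Φ : GraphProperty) (k : ℕ) {V : Type} [Fintype V]
    (G : SimpleGraph V) : ℕ :=
  Nat.card {S : Finset V // S.card = k ∧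
    ∃ e : Fin k ≃ (S : Set V), Φ k ((G.induce (S : Set V)).comap e)}

/-- Graphs on `Fin n` up to isomorphism. -/
instance graphSetoid (n : ℕ) : Setoid (SimpleGraph (Fin n)) where
  r G G' := Nonempty (G ≃g G')
  iseqv := by
    refine ⟨fun G => ⟨RelIso.refl _⟩, ?_, ?_⟩
    · rintro G G' ⟨e⟩; exact ⟨e.symm⟩
    · rintro G G' G'' ⟨e⟩ ⟨f⟩; exact ⟨e.trans f⟩

/-- Isomorphism classes of graphs on `n` vertices. -/
abbrev GraphClass (n : ℕ) := Quotient (graphSetoid n)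

/-- The number of graph homomorphisms from `H` to `G`. -/
noncomputable def homCount {n : ℕ} (H : SimpleGraph (Fin n)) {V : Type} [Fintype V]
    (G : SimpleGraph V) : ℕ :=
  Nat.card (H →g G)

/-- The number of homomorphisms from (a representative of) an isomorphism class to `G`. -/
noncomputable def classHomCount {n : ℕ} (c : GraphClass n) {V : Type} [Fintype V]
    (G : SimpleGraph V) : ℕ :=
  homCount c.out G

open scoped Nat

theorem Nat.card_eq_sum_card_fiber {α ι : Type*} [Finite α] [Fintype ι] (κ : α → ι) :
    Nat.card α = ∑ i, Nat.card {a // κ a = i} := by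
  rw [← Nat.card_sigma]
  exact Nat.card_congr (Equiv.sigmaFiberEquiv κ).symm

theorem Nat.card_subtype_eq_sum_card_fiber {α ι : Type*} [Finite α] [Fintype ι] (κ : α → ι)
    (p : ι → Prop) [DecidablePred p] :
    Nat.card {a // p (κ a)} = ∑ i with p i, Nat.card {a // κ a = i} := by
  rw [Nat.card_eq_sum_card_fiber fun a : {a // p (κ a)} => κ a, Finset.sum_filter]
  refine Finset.sum_congr rfl fun i _ => ?_
  split_ifs with hi
  · exact Nat.card_congr
      ⟨fun a => ⟨a.1.1, a.2⟩, fun a => ⟨⟨a.1, a.2.symm ▸ hi⟩, a.2⟩, fun _ => rfl, fun _ => rfl⟩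
  · exact Nat.card_eq_zero.2 (Or.inl ⟨fun a => hi (by rw [← a.2]; exact a.1.2)⟩)

instance Setoid.instFinite {W : Type*} [Finite W] : Finite (Setoid W) :=
  Finite.of_injective (fun s : Setoid W => ⇑s) fun _ _ => Setoid.eq_iff_rel_eq.2

noncomputable instance Setoid.instFintype {W : Type*} [Finite W] : Fintype (Setoid W) :=
  Fintype.ofFinite _

instance SimpleGraph.Copy.instFinite {α β : Type*} [Finite α] [Finite β] {A : SimpleGraph α}
    {B : SimpleGraph β} : Finite (Copy A B) :=
  FunLike.finite _

variable {W V : Type}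

def IsIndepSetoid (H : SimpleGraph W) (s : Setoid W) : Prop :=
  ∀ ⦃u v⦄, H.Adj u v → ¬ s u v

def homWithKerEquivCopy {H : SimpleGraph W} {G : SimpleGraph V} {s : Setoid W}
    (hs : IsIndepSetoid H s) :
    {f : H →g G // Setoid.ker f = s} ≃ Copy (H.map (Quotient.mk s)) G where
  toFun f :=
    have hker (a b : W) : f.1 a = f.1 b ↔ s a b := Setoid.ext_iff.1 f.2 a b
    ⟨⟨Quotient.lift f.1 fun a b => (hker a b).2,
        by rintro _ _ ⟨-, u, v, huv, rfl, rfl⟩; exact f.1.map_adj huv⟩,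
      by rintro ⟨a⟩ ⟨b⟩ h; exact Quotient.sound ((hker a b).1 h)⟩
  invFun g :=
    ⟨g.toHom.comp (Hom.map (Quotient.mk s) H fun huv heq => hs huv (Quotient.exact heq)),
      Setoid.ext fun a b => g.injective.eq_iff.trans Quotient.eq⟩
  left_inv _ := rfl
  right_inv g := Copy.ext fun x => Quotient.inductionOn x fun _ => rfl

theorem card_hom_eq_sum_card_copy_map [Finite W] [Finite V] (H : SimpleGraph W)
    (G : SimpleGraph V) [DecidablePred (IsIndepSetoid H)] :
    Nat.card (H →g G) =
      ∑ s with IsIndepSetoid H s, Nat.card (Copy (H.map (Quotient.mk s)) G) := by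
  rw [Nat.card_eq_sum_card_fiber fun f : H →g G => Setoid.ker f, Finset.sum_filter]
  refine Finset.sum_congr rfl fun s _ => ?_
  split_ifs with hs
  · exact Nat.card_congr (homWithKerEquivCopy hs)
  · refine Nat.card_eq_zero.2 (Or.inl ⟨fun f => hs fun u v huv hsuv => ?_⟩)
    rw [← f.2] at hsuv
    exact (f.1.map_adj huv).ne hsuv

theorem Setoid.nat_card_quotient_lt_of_ne_bot [Finite W] {s : Setoid W} (hs : s ≠ ⊥) :
    Nat.card (Quotient s) < Nat.card W := by
  refine (Nat.card_le_card_of_surjective _ Quotient.mk_surjective).lt_of_ne fun h => hs ?_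
  rw [← Setoid.ker_mk_eq s, Setoid.ker_eq_bot_iff]
  exact (Quotient.mk_surjective.bijective_of_nat_card_le h.ge).1

noncomputable def mapQuotientBotIso (H : SimpleGraph W) : H.map (Quotient.mk (⊥ : Setoid W)) ≃g H :=
  (Iso.map (Equiv.ofBijective _ ⟨fun _ _ h => Quotient.exact h, Quotient.mk_surjective⟩) H).symm

def copyEquivEmbeddingLeComap (H : SimpleGraph W) (G : SimpleGraph V) :
    Copy H G ≃ {f : W ↪ V // H ≤ G.comap f} where
  toFun f := ⟨f.toEmbedding, fun _ _ huv => f.toHom.map_adj huv⟩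
  invFun f := ⟨⟨f.1, fun huv => f.2 huv⟩, f.1.injective⟩
  left_inv _ := rfl
  right_inv _ := rfl

def embeddingEquivComapEq (H : SimpleGraph W) (G : SimpleGraph V) :
    (H ↪g G) ≃ {f : W ↪ V // G.comap f = H} where
  toFun f := ⟨f.toEmbedding, SimpleGraph.ext <| funext₂ fun _ _ => propext f.map_adj_iff⟩
  invFun f := ⟨f.1, fun {a b} => iff_of_eq (congrArg (·.Adj a b) f.2)⟩
  left_inv _ := rfl
  right_inv _ := rfl

theorem card_embedding_subtype_comap_eq_sum [Fintype W] [DecidableEq W] [Finite V]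
    (G : SimpleGraph V) (p : SimpleGraph W → Prop) [DecidablePred p] :
    Nat.card {f : W ↪ V // p (G.comap f)} = ∑ H with p H, Nat.card (H ↪g G) := by
  rw [Nat.card_subtype_eq_sum_card_fiber (fun f : W ↪ V => G.comap f) p]
  exact Finset.sum_congr rfl fun H _ => (Nat.card_congr (embeddingEquivComapEq H G)).symm

theorem card_copy_eq_sum_card_embedding [Fintype W] [DecidableEq W] [Finite V]
    (H : SimpleGraph W) (G : SimpleGraph V) [DecidablePred (H ≤ ·)] :
    Nat.card (Copy H G) = ∑ H' with H ≤ H', Nat.card (H' ↪g G) := by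
  rw [Nat.card_congr (copyEquivEmbeddingLeComap H G)]
  exact card_embedding_subtype_comap_eq_sum G (H ≤ ·)

section InducedSubgraphs

variable {k : ℕ}

noncomputable def equivMapUniv (f : Fin k ↪ V) :
    Fin k ≃ ((Finset.univ.map f : Finset V) : Set V) :=
  (Equiv.ofInjective f f.injective).trans (Equiv.setCongr (by simp))

theorem card_embedding_map_univ_eq {S : Finset V} (hS : S.card = k) :
    Nat.card {f : Fin k ↪ V // Finset.univ.map f = S} = k ! := by
  have hbij : Function.Bijective fun e : Fin k ≃ S =>
      (⟨e.toEmbedding.trans (Function.Embedding.subtype _), Finset.ext fun x => by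
        simpa using ⟨by rintro ⟨i, rfl⟩; exact (e i).2, fun hx => ⟨e.symm ⟨x, hx⟩, by simp⟩⟩⟩ :
        {f : Fin k ↪ V // Finset.univ.map f = S}) := by
    refine ⟨fun e e' h => Equiv.ext fun i => Subtype.ext (congrArg (fun f => f.1 i) h), ?_⟩
    rintro ⟨f, rfl⟩
    exact ⟨equivMapUniv f, rfl⟩
  rw [← Nat.card_eq_of_bijective _ hbij,
    Nat.card_congr ((Equiv.refl (Fin k)).equivCongr (Finset.equivFinOfCardEq hS)),
    Nat.card_perm, Nat.card_fin]

theorem Invariant.comap_equiv_iff {Φ : GraphProperty} (hΦ : Invariant Φ) {X : Type*}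
    (K : SimpleGraph X) (e e' : Fin k ≃ X) : Φ k (K.comap e) ↔ Φ k (K.comap e') :=
  hΦ k _ _ ⟨(Iso.comap e K).trans (Iso.comap e' K).symm⟩

theorem card_embedding_comap_eq_indSub_mul_factorial [Fintype V] {Φ : GraphProperty}
    (hΦ : Invariant Φ) (G : SimpleGraph V) :
    Nat.card {f : Fin k ↪ V // Φ k (G.comap f)} = indSub Φ k G * k ! := by
  classical
  let Q (S : Finset V) : Prop :=
    S.card = k ∧ ∃ e : Fin k ≃ (S : Set V), Φ k ((G.induce (S : Set V)).comap e)
  have hQ (f : Fin k ↪ V) : Φ k (G.comap f) ↔ Q (Finset.univ.map f) :=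
    ⟨fun h => ⟨by simp, equivMapUniv f, h⟩,
      fun ⟨_, e, he⟩ => (hΦ.comap_equiv_iff _ e (equivMapUniv f)).1 he⟩
  calc Nat.card {f : Fin k ↪ V // Φ k (G.comap f)}
      = Nat.card {f : Fin k ↪ V // Q (Finset.univ.map f)} :=
        Nat.card_congr (Equiv.subtypeEquivRight hQ)
    _ = ∑ S with Q S, Nat.card {f : Fin k ↪ V // Finset.univ.map f = S} :=
        Nat.card_subtype_eq_sum_card_fiber _ Q
    _ = ∑ S with Q S, k ! :=
        Finset.sum_congr rfl fun S hS => card_embedding_map_univ_eq (Finset.mem_filter.1 hS).2.1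
    _ = indSub Φ k G * k ! := by
        rw [Finset.sum_const, smul_eq_mul, indSub, Nat.card_eq_fintype_card,
          Fintype.card_subtype]

end InducedSubgraphs

abbrev GraphParameter : Type 1 := (V : Type) → [Fintype V] → SimpleGraph V → ℚ

namespace GraphParameter

theorem ext {F F' : GraphParameter}
    (h : ∀ (V : Type) [Fintype V] (G : SimpleGraph V), F V G = F' V G) : F = F' :=
  funext fun V => funext fun _ => funext (h V)

end GraphParameter

noncomputable def homParam (H : SimpleGraph W) : GraphParameter := fun _ _ G => Nat.card (H →g G)

noncomputable def copyParam (H : SimpleGraph W) : GraphParameter :=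
  fun _ _ G => Nat.card (Copy H G)

noncomputable def embParam (H : SimpleGraph W) : GraphParameter :=
  fun _ _ G => Nat.card (H ↪g G)

noncomputable def indSubParam (Φ : GraphProperty) (k : ℕ) : GraphParameter :=
  fun _ _ G => indSub Φ k G

theorem homParam_congr {W' : Type} {H : SimpleGraph W} {H' : SimpleGraph W'} (e : H ≃g H') :
    homParam H = homParam H' :=
  GraphParameter.ext fun _ _ _ => congrArg _ <| Nat.card_congr
    ⟨(·.comp e.symm.toHom), (·.comp e.toHom), fun f => by ext; simp, fun f => by ext; simp⟩

theorem copyParam_congr {W' : Type} {H : SimpleGraph W} {H' : SimpleGraph W'} (e : H ≃g H') :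
    copyParam H = copyParam H' :=
  GraphParameter.ext fun _ _ _ => congrArg _ <| Nat.card_congr
    ⟨(·.comp e.symm.toCopy), (·.comp e.toCopy), fun f => by ext; simp, fun f => by ext; simp⟩

open scoped Classical in
theorem homParam_eq_sum_copyParam [Finite W] (H : SimpleGraph W) :
    homParam H = ∑ s with IsIndepSetoid H s, copyParam (H.map (Quotient.mk s)) :=
  GraphParameter.ext fun V _ G => by
    simp only [homParam, copyParam, Finset.sum_apply, card_hom_eq_sum_card_copy_map H G,
      Nat.cast_sum]

open scoped Classical in
theorem copyParam_eq_homParam_sub [Finite W] (H : SimpleGraph W) :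
    copyParam H = homParam H -
      ∑ s ∈ (Finset.univ.filter (IsIndepSetoid H)).erase ⊥,
        copyParam (H.map (Quotient.mk s)) := by
  have hbot : ⊥ ∈ Finset.univ.filter (IsIndepSetoid H) :=
    Finset.mem_filter.2 ⟨Finset.mem_univ _, fun _ _ huv h => huv.ne h⟩
  rw [homParam_eq_sum_copyParam, ← Finset.add_sum_erase _ _ hbot,
    copyParam_congr (mapQuotientBotIso H), add_sub_cancel_right]

open scoped Classical in
theorem copyParam_eq_sum_embParam [Fintype W] (H : SimpleGraph W) :
    copyParam H = ∑ H' with H ≤ H', embParam H' :=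
  GraphParameter.ext fun V _ G => by
    simp only [copyParam, embParam, Finset.sum_apply, card_copy_eq_sum_card_embedding H G,
      Nat.cast_sum]

open scoped Classical in
theorem factorial_smul_indSubParam {Φ : GraphProperty} (hΦ : Invariant Φ) (k : ℕ) :
    (k ! : ℚ) • indSubParam Φ k = ∑ H : SimpleGraph (Fin k) with Φ k H, embParam H :=
  GraphParameter.ext fun V _ G => by
    simp only [indSubParam, embParam, Finset.sum_apply, Pi.smul_apply, smul_eq_mul,
      ← Nat.cast_sum, ← card_embedding_subtype_comap_eq_sum,
      card_embedding_comap_eq_indSub_mul_factorial hΦ, Nat.cast_mul, mul_comm]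

noncomputable instance (n : ℕ) : Fintype (GraphClass n) := Fintype.ofFinite _

noncomputable def classHomParam (c : Σ n, GraphClass n) : GraphParameter := homParam c.2.out

noncomputable def classCopyParam (c : Σ n, GraphClass n) : GraphParameter := copyParam c.2.out

noncomputable def classesUpTo (N : ℕ) : Finset (Σ n, GraphClass n) :=
  (Finset.range (N + 1)).sigma fun _ => Finset.univ

theorem mem_classesUpTo {N : ℕ} {c : Σ n, GraphClass n} : c ∈ classesUpTo N ↔ c.1 ≤ N := by
  simp [classesUpTo]

noncomputable def homSpan (N : ℕ) : Submodule ℚ GraphParameter :=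
  Submodule.span ℚ (Set.range fun c : classesUpTo N => classHomParam c)

noncomputable def copySpan (N : ℕ) : Submodule ℚ GraphParameter :=
  Submodule.span ℚ (Set.range fun c : classesUpTo N => classCopyParam c)

theorem exists_class_iso [Finite W] (H : SimpleGraph W) :
    ∃ c : Σ n, GraphClass n, c.1 = Nat.card W ∧ Nonempty (c.2.out ≃g H) :=
  ⟨⟨_, ⟦H.comap (Finite.equivFin W).symm⟧⟩, rfl,
    ⟨(Classical.choice (Quotient.mk_out (s := graphSetoid _) _)).trans (Iso.comap _ H)⟩⟩

theorem homParam_mem_homSpan [Finite W] {N : ℕ} (H : SimpleGraph W) (hW : Nat.card W ≤ N) :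
    homParam H ∈ homSpan N := by
  obtain ⟨c, hc, ⟨e⟩⟩ := exists_class_iso H
  exact Submodule.subset_span ⟨⟨c, mem_classesUpTo.2 (hc ▸ hW)⟩, homParam_congr e⟩

theorem copyParam_mem_copySpan [Finite W] {N : ℕ} (H : SimpleGraph W) (hW : Nat.card W ≤ N) :
    copyParam H ∈ copySpan N := by
  obtain ⟨c, hc, ⟨e⟩⟩ := exists_class_iso H
  exact Submodule.subset_span ⟨⟨c, mem_classesUpTo.2 (hc ▸ hW)⟩, copyParam_congr e⟩

theorem homParam_mem_copySpan [Finite W] {N : ℕ} (H : SimpleGraph W) (hW : Nat.card W ≤ N) :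
    homParam H ∈ copySpan N := by
  classical
  rw [homParam_eq_sum_copyParam]
  exact Submodule.sum_mem _ fun s _ =>
    copyParam_mem_copySpan _ ((Nat.card_le_card_of_surjective _ Quotient.mk_surjective).trans hW)

theorem copyParam_mem_homSpan {W : Type} [Finite W] {N : ℕ} (H : SimpleGraph W)
    (hW : Nat.card W ≤ N) : copyParam H ∈ homSpan N := by
  classical
  rw [copyParam_eq_homParam_sub]
  refine Submodule.sub_mem _ (homParam_mem_homSpan H hW) (Submodule.sum_mem _ fun s hs => ?_)
  have hlt := Setoid.nat_card_quotient_lt_of_ne_bot (Finset.ne_of_mem_erase hs)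
  exact copyParam_mem_homSpan _ (hlt.le.trans hW)
termination_by Nat.card W

theorem homSpan_eq_copySpan (N : ℕ) : homSpan N = copySpan N := by
  refine le_antisymm (Submodule.span_le.2 ?_) (Submodule.span_le.2 ?_) <;>
    rintro _ ⟨⟨c, hc⟩, rfl⟩ <;>
    have hc : Nat.card (Fin c.1) ≤ N := by simpa using mem_classesUpTo.1 hc
  exacts [homParam_mem_copySpan _ hc, copyParam_mem_homSpan _ hc]

theorem embParam_mem_homSpan [Fintype W] (H : SimpleGraph W) :
    embParam H ∈ homSpan (Nat.card W) := by
  classical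
  induction H using WellFoundedGT.induction with
  | _ H ih =>
  have hH : H ∈ Finset.univ.filter (H ≤ ·) := Finset.mem_filter.2 ⟨Finset.mem_univ _, le_rfl⟩
  have : embParam H = copyParam H - ∑ H' ∈ (Finset.univ.filter (H ≤ ·)).erase H, embParam H' := by
    rw [copyParam_eq_sum_embParam, ← Finset.add_sum_erase _ _ hH, add_sub_cancel_right]
  rw [this]
  refine Submodule.sub_mem _ (copyParam_mem_homSpan H le_rfl) (Submodule.sum_mem _ fun H' hH' => ?_)
  obtain ⟨hne, hle⟩ := Finset.mem_erase.1 hH'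
  exact ih H' (lt_of_le_of_ne (Finset.mem_filter.1 hle).2 hne.symm)

theorem indSubParam_mem_homSpan {Φ : GraphProperty} (hΦ : Invariant Φ) (k : ℕ) :
    indSubParam Φ k ∈ homSpan k := by
  classical
  have hk : (k ! : ℚ) ≠ 0 := by positivity
  rw [← inv_smul_smul₀ hk (indSubParam Φ k), factorial_smul_indSubParam hΦ]
  refine Submodule.smul_mem _ _ (Submodule.sum_mem _ fun H _ => ?_)
  simpa using embParam_mem_homSpan H

theorem SimpleGraph.Copy.nonempty_iso_of_card_le {α β : Type*} [Finite β] {A : SimpleGraph α}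
    {B : SimpleGraph β} (f : Copy A B) (hV : Nat.card β ≤ Nat.card α)
    (hE : Nat.card B.edgeSet ≤ Nat.card A.edgeSet) : Nonempty (A ≃g B) := by
  have hf := f.injective.bijective_of_nat_card_le hV
  have hfE := f.mapEdgeSet.injective.bijective_of_nat_card_le hE
  refine ⟨⟨Equiv.ofBijective f hf, fun {u v} => ⟨fun huv => ?_, f.toHom.map_adj⟩⟩⟩
  obtain ⟨⟨e, he⟩, hee⟩ := hfE.2 ⟨s(f u, f v), huv⟩
  have : e = s(u, v) := Sym2.map.injective f.injective (congrArg Subtype.val hee)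
  rwa [this] at he

noncomputable def classSize (c : Σ n, GraphClass n) : ℕ := c.1 + Nat.card c.2.out.edgeSet

theorem eq_of_copy_of_classSize_le {c d : Σ n, GraphClass n} (f : Copy c.2.out d.2.out)
    (h : classSize d ≤ classSize c) : c = d := by
  obtain ⟨n, c⟩ := c
  obtain ⟨m, d⟩ := d
  have hV := Nat.card_le_card_of_injective f f.injective
  have hE := Nat.card_le_card_of_injective f.mapEdgeSet f.mapEdgeSet.injective
  dsimp only [classSize] at h hE
  simp only [Nat.card_fin] at hV
  obtain rfl : n = m := by omega
  obtain ⟨e⟩ := f.nonempty_iso_of_card_le (by simp) (by dsimp only; omega)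
  exact congrArg _ (Quotient.out_equiv_out.1 ⟨e⟩)

theorem linearIndependent_classCopyParam : LinearIndependent ℚ classCopyParam := by
  classical
  rw [linearIndependent_iff']
  intro s g hg
  by_contra! hne
  obtain ⟨c, hc, hmin⟩ := (s.filter (g · ≠ 0)).exists_min_image classSize
    (by simpa [Finset.Nonempty] using hne)
  obtain ⟨hcs, hgc⟩ := Finset.mem_filter.1 hc
  -- Evaluate at `c` itself: a class of nonzero coefficient with a copy in `c.2.out` has
  -- `classSize` at most that of `c`, so by minimality it is `c`.
  have hval := congrArg (fun F : GraphParameter => F (Fin c.1) c.2.out) hg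
  simp only [Finset.sum_apply, Pi.smul_apply, smul_eq_mul, Pi.zero_apply] at hval
  rw [Finset.sum_eq_single_of_mem c hcs fun d hds hdc => ?_] at hval
  · have : 0 < Nat.card (Copy c.2.out c.2.out) := Nat.card_pos_iff.2 ⟨⟨Copy.id _⟩, inferInstance⟩
    exact (mul_ne_zero hgc (Nat.cast_ne_zero.2 this.ne')) hval
  · by_cases hgd : g d = 0
    · rw [hgd, zero_mul]
    have : IsEmpty (Copy d.2.out c.2.out) :=
      ⟨fun f => hdc (eq_of_copy_of_classSize_le f (hmin d (Finset.mem_filter.2 ⟨hds, hgd⟩)))⟩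
    simp [classCopyParam, copyParam]

theorem linearIndependent_classHomParam_classesUpTo (N : ℕ) :
    LinearIndependent ℚ fun c : classesUpTo N => classHomParam c := by
  have hcopy := linearIndependent_iff_card_eq_finrank_span.1
    (linearIndependent_classCopyParam.comp (fun c : classesUpTo N => c.1) Subtype.val_injective)
  rw [Set.finrank] at hcopy
  rw [linearIndependent_iff_card_eq_finrank_span, Set.finrank]
  change _ = Module.finrank ℚ (homSpan N)
  rw [homSpan_eq_copySpan]
  exact hcopy

theorem linearIndependent_classHomParam : LinearIndependent ℚ classHomParam := by
  rw [linearIndependent_iff_finset_linearIndependent]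
  intro s
  have := (linearIndependent_classHomParam_classesUpTo (s.sup Sigma.fst)).comp
    (fun c : s => ⟨c.1, mem_classesUpTo.2 (Finset.le_sup (f := Sigma.fst) c.2)⟩)
    fun _ _ h => Subtype.ext (Subtype.mk.inj h)
  exact this

theorem homSpan_le_span_range (N : ℕ) : homSpan N ≤ Submodule.span ℚ (Set.range classHomParam) :=
  Submodule.span_mono (Set.range_subset_iff.2 fun c => ⟨c, rfl⟩)

theorem linearCombination_classHomParam_apply (b : (Σ n, GraphClass n) →₀ ℚ) (V : Type)
    [Fintype V] (G : SimpleGraph V) :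
    Finsupp.linearCombination ℚ classHomParam b V G =
      ∑ᶠ c : Σ n, GraphClass n, b c * (classHomCount c.2 G : ℚ) := by
  rw [finsum_eq_sum_of_support_subset _ ((Function.support_mul_subset_left _ _).trans
    b.fun_support_eq.subset), Finsupp.linearCombination_apply, Finsupp.sum]
  simp [Finset.sum_apply, classHomParam, homParam, classHomCount, homCount]

theorem stmt3_general (Φ : GraphProperty) (hΦ : Invariant Φ) (k : ℕ) :
    ∃! a : (Σ n, GraphClass n) → ℚ,
      (Function.support a).Finite ∧
      ∀ (V : Type) [Fintype V], ∀ G : SimpleGraph V,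
        (indSub Φ k G : ℚ) = ∑ᶠ c : Σ n, GraphClass n, a c * (classHomCount c.2 G : ℚ) := by
  obtain ⟨b, hb⟩ := Finsupp.mem_span_range_iff_exists_finsupp.1
    (homSpan_le_span_range k (indSubParam_mem_homSpan hΦ k))
  rw [← Finsupp.linearCombination_apply] at hb
  refine ⟨b, ⟨b.hasFiniteSupport, fun V _ G => ?_⟩, fun a ⟨ha, hrep⟩ => ?_⟩
  · rw [← linearCombination_classHomParam_apply, hb]
    rfl
  · have : Finsupp.ofSupportFinite a ha = b := linearIndependent_classHomParam <|
      hb ▸ GraphParameter.ext fun V _ G => by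
        rw [linearCombination_classHomParam_apply, Finsupp.ofSupportFinite_coe, ← hrep]
        rfl
    rw [← this, Finsupp.ofSupportFinite_coe]

/-- There is a unique finitely supported function `a` from isomorphism classes of graphs
to `ℚ` such that `#IndSub(Φ,k,G) = Σ_H a(H) · #Hom(H,G)` for every graph `G`. -/
theorem stmt3 (Φ : GraphProperty) (hΦ : Invariant Φ) (k : ℕ) (hk : 0 < k) :
    ∃! a : (Σ n, GraphClass n) → ℚ,
      (Function.support a).Finite ∧
      ∀ (V : Type) [Fintype V], ∀ G : SimpleGraph V,
        (indSub Φ k G : ℚ) = ∑ᶠ c : Σ n, GraphClass n, a c * (classHomCount c.2 G : ℚ) :=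
  stmt3_general Φ hΦ k
end

section
/- Let Φ be a graph property, k a positive integer, d = k(k−1)/2, and a the unique finitely supported rational coefficient function with #IndSub(Φ,k,G) = Σ_H a(H)·#Hom(H,G) for all graphs G. Then for every i ∈ {0,…,d}, k! · Σ_{K ∈ H_i} a(K) = h^{Φ,k}_i, where H_i is the set of isomorphism classes of graphs on k vertices with exactly i edges. -/
open SimpleGraph

/-- The number of edges of a graph. -/
noncomputable def edgeCount {V : Type} (G : SimpleGraph V) : ℕ := Nat.card G.edgeSet

/-- The `i`-th entry of the f-vector of `Φ` and `k`: the number of edge subsets `A` of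
size `i` of the complete graph on `k` labeled vertices such that `K_k[A]` satisfies `Φ`
(encoded as graphs `L` on `Fin k` with `i` edges satisfying `Φ`). -/
noncomputable def fVec (Φ : GraphProperty) (k i : ℕ) : ℕ :=
  Nat.card {L : SimpleGraph (Fin k) // edgeCount L = i ∧ Φ k L}

/-- The `ℓ`-th entry of the h-vector of `Φ` and `k`. -/
noncomputable def hVec (Φ : GraphProperty) (k ℓ : ℕ) : ℚ :=
  ∑ i ∈ Finset.range (ℓ + 1),
    (-1 : ℚ) ^ (ℓ - i) * ((k * (k - 1) / 2 - i).choose (ℓ - i) : ℚ) * (fVec Φ k i : ℚ)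

/-!
Blowing up every vertex of a graph `G` into `m` twins multiplies `#Hom(H, G)` by `m ^ |V(H)|`,
so `m ↦ #IndSub(Φ, k, G[m])` is a polynomial whose coefficient of `m ^ k` only involves the
coefficients `a(H)` of graphs `H` on `k` vertices. For a graph `L` on `k` labelled vertices, the
alternating sum over vertex sets `S` of the blow-ups of `L[S]` only counts the `k`-sets meeting
every fibre of the blow-up of `L` exactly once, and equals `[Φ(L)] · m ^ k`; on the side of
homomorphisms the same alternating sum turns `#Hom(H, L[S])` into the number of surjective, hence
bijective, homomorphisms `H → L`. So `Σ_H a(H) · #Surj(H, L) = [Φ(L)]` for every `L`. Summing over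
the labelled `L` with `j` edges gives `f_j = k! · Σ_H a(H) · C(d - e(H), j - e(H))`, a binomial
convolution which the h-vector transform inverts.
-/

open Finset SimpleGraph
open scoped Classical

theorem sum_neg_one_pow_card_compl_mul_card_filter_subset {ι α R : Type*} [Fintype α]
    [DecidableEq α] [CommRing R] (s : Finset ι) (t : ι → Finset α) :
    ∑ S : Finset α, (-1 : R) ^ #Sᶜ * #{x ∈ s | t x ⊆ S} = #{x ∈ s | t x = univ} := by
  have inner (r : Finset α) :
      ∑ S : Finset α, (if r ⊆ S then (-1 : R) ^ #Sᶜ else 0) = if r = univ then 1 else 0 := by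
    calc ∑ S : Finset α, (if r ⊆ S then (-1 : R) ^ #Sᶜ else 0)
        = ∑ S : Finset α, (if S ⊆ rᶜ then (-1 : R) ^ #S else 0) := by
          rw [← Equiv.sum_comp (compl_involutive.toPerm _)]
          simp [subset_compl_comm]
      _ = ∑ S ∈ rᶜ.powerset, (-1 : R) ^ #S := by
          rw [← sum_filter]; congr 1; ext; simp
      _ = if r = univ then 1 else 0 := by
          have := congrArg (Int.cast : ℤ → R) (sum_powerset_neg_one_pow_card (x := rᶜ))
          push_cast at this
          simpa [compl_eq_empty_iff] using this
  simp only [← sum_boole, mul_sum]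
  rw [sum_comm]
  refine sum_congr rfl fun x _ => ?_
  rw [← inner (t x)]
  refine sum_congr rfl fun S _ => ?_
  split_ifs <;> simp

theorem eq_of_forall_natCast_sum_mul_pow_eq {K : Type*} [CommRing K] [IsDomain K] [CharZero K]
    {N : ℕ} {u v : ℕ → K}
    (h : ∀ m : ℕ, ∑ n ∈ range N, u n * (m : K) ^ n = ∑ n ∈ range N, v n * (m : K) ^ n) :
    ∀ j < N, u j = v j := by
  open Polynomial in
  intro j hj
  set p : K[X] := ∑ n ∈ range N, C (u n - v n) * X ^ n
  have hp : p = 0 := by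
    refine eq_of_infinite_eval_eq p 0 (Set.Infinite.mono ?_ (Set.infinite_range_of_injective
      (Nat.cast_injective (R := K))))
    rintro _ ⟨m, rfl⟩
    simp [p, eval_finsetSum, sub_mul, sum_sub_distrib, h m]
  have := congrArg (coeff · j) hp
  simpa [p, finsetSum_coeff, coeff_C_mul_X_pow, hj, sub_eq_zero, -map_sub] using this

theorem sum_neg_one_pow_mul_choose_mul_choose {d e i : ℕ} (hi : i ≤ d) :
    ∑ j ∈ range (i + 1), (-1 : ℚ) ^ (i - j) * ((d - j).choose (i - j) : ℚ) *
        (if e ≤ j then ((d - e).choose (j - e) : ℚ) else 0) =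
      if e = i then 1 else 0 := by
  rcases lt_or_ge i e with hie | hei
  · rw [if_neg hie.ne', sum_eq_zero]
    intro j hj
    rw [if_neg (by simp at hj; omega), mul_zero]
  -- `C(d-j, i-j) C(d-e, j-e) = C(d-e, i-e) C(i-e, j-e)` reduces the sum to `(1 - 1)^(i-e)`.
  obtain ⟨t, rfl⟩ := Nat.exists_eq_add_of_le hei
  have hterm (s : ℕ) (hs : s ≤ t) :
      (-1 : ℚ) ^ (e + t - (e + s)) * ((d - (e + s)).choose (e + t - (e + s)) : ℚ) *
        ((d - e).choose (e + s - e) : ℚ) =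
      ((d - e).choose t : ℚ) * ((1 : ℚ) ^ s * (-1) ^ (t - s) * (t.choose s : ℚ)) := by
    have := Nat.choose_mul (n := d - e) (k := t) hs
    rw [show d - e - s = d - (e + s) by omega] at this
    rw [show e + t - (e + s) = t - s by omega, show e + s - e = s by omega, one_pow, one_mul]
    have hc : ((d - e).choose t : ℚ) * (t.choose s : ℚ) =
        ((d - e).choose s : ℚ) * ((d - (e + s)).choose (t - s) : ℚ) := by exact_mod_cast this
    linear_combination -(-1 : ℚ) ^ (t - s) * hc
  rw [← sum_range_add_sum_Ico _ (by omega : e ≤ e + t + 1), sum_eq_zero, zero_add,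
    sum_Ico_eq_sum_range, show e + t + 1 - e = t + 1 by omega]
  · rw [sum_congr rfl fun s hs => by
      rw [if_pos (by omega), hterm s (by simp at hs; omega)], ← mul_sum, ← add_pow]
    rcases eq_or_ne t 0 with rfl | ht
    · simp
    · simp [ht]
  · intro j hj
    rw [if_neg (by simp at hj; omega), mul_zero]

theorem card_filter_Icc_card_eq {α : Type*} [DecidableEq α] {s u : Finset α} (hsu : s ⊆ u)
    (j : ℕ) : #{t ∈ Icc s u | #t = j} = if #s ≤ j then (#u - #s).choose (j - #s) else 0 := by
  have hdisj {r : Finset α} (hr : r ∈ (u \ s).powerset) : Disjoint s r :=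
    disjoint_of_subset_right (mem_powerset.mp hr) disjoint_sdiff
  rw [Icc_eq_image_powerset hsu, filter_image, card_image_of_injOn]
  · split_ifs with hj
    · rw [← card_sdiff_of_subset hsu, ← card_powersetCard, powersetCard_eq_filter]
      congr 1
      refine filter_congr fun r hr => ?_
      rw [card_union_of_disjoint (hdisj hr)]
      omega
    · rw [card_eq_zero, filter_eq_empty_iff]
      intro r hr
      rw [card_union_of_disjoint (hdisj hr)]
      omega
  · intro r₁ hr₁ r₂ hr₂ h
    have := congrArg (· \ s) h
    simpa [union_sdiff_left, sdiff_eq_self_of_disjoint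
      (hdisj (mem_filter.mp hr₁).1).symm, sdiff_eq_self_of_disjoint
      (hdisj (mem_filter.mp hr₂).1).symm] using this

lemma edgeCount_eq_card_edgeFinset {V : Type} (G : SimpleGraph V) [Fintype G.edgeSet] :
    edgeCount G = #G.edgeFinset := by
  rw [edgeCount, Nat.card_eq_fintype_card, edgeFinset_card]

lemma edgeCount_congr {V W : Type} {G : SimpleGraph V} {G' : SimpleGraph W} (e : G ≃g G') :
    edgeCount G = edgeCount G' :=
  Nat.card_congr e.mapEdgeSet

lemma card_edgeFinset_top_fin (k : ℕ) :
    #(⊤ : SimpleGraph (Fin k)).edgeFinset = k * (k - 1) / 2 := by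
  rw [card_edgeFinset_top_eq_card_choose_two, Fintype.card_fin, Nat.choose_two_right]

-- The `Fintype` instance is taken by unification, so that the lemma rewrites whichever
-- instance the goal carries.
lemma edgeFinset_fromEdgeSet_of_subset {V : Type} {t : Finset (Sym2 V)}
    [Fintype (⊤ : SimpleGraph V).edgeSet] {_ : Fintype (fromEdgeSet (t : Set (Sym2 V))).edgeSet}
    (ht : t ⊆ (⊤ : SimpleGraph V).edgeFinset) :
    (fromEdgeSet (t : Set (Sym2 V))).edgeFinset = t := by
  rw [← coe_inj, coe_edgeFinset, edgeSet_fromEdgeSet, sdiff_eq_left, Set.disjoint_left]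
  exact fun x hx => not_isDiag_of_mem_edgeSet _ (mem_edgeFinset.mp (ht hx))

theorem card_supergraphs_edgeCount_eq {V : Type} [Fintype V] [DecidableEq V]
    (H : SimpleGraph V) (j : ℕ) :
    #{L : SimpleGraph V | H ≤ L ∧ edgeCount L = j} =
      if edgeCount H ≤ j then
        (#(⊤ : SimpleGraph V).edgeFinset - edgeCount H).choose (j - edgeCount H) else 0 := by
  simp only [edgeCount_eq_card_edgeFinset]
  rw [← card_filter_Icc_card_eq (edgeFinset_mono le_top)]
  refine card_nbij' (fun L => L.edgeFinset) (fun t => fromEdgeSet t) ?_ ?_ ?_ ?_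
  · intro L hL
    simp only [coe_filter, mem_Icc, Set.mem_ofPred_eq, mem_univ, true_and] at hL ⊢
    exact ⟨⟨edgeFinset_mono hL.1, edgeFinset_mono le_top⟩, hL.2⟩
  · intro t ht
    simp only [coe_filter, mem_Icc, Set.mem_ofPred_eq, mem_univ, true_and] at ht ⊢
    rw [edgeFinset_fromEdgeSet_of_subset ht.1.2]
    refine ⟨?_, ht.2⟩
    rw [le_fromEdgeSet_iff, ← coe_edgeFinset]
    exact_mod_cast ht.1.1
  · intro L _
    simp
  · intro t ht
    simp only [coe_filter, mem_Icc, Set.mem_ofPred_eq] at ht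
    exact edgeFinset_fromEdgeSet_of_subset ht.1.2

theorem card_surjective_hom_eq {V : Type} [Fintype V] (H L : SimpleGraph V) :
    Nat.card {f : H →g L // Function.Surjective f} = #{σ : Equiv.Perm V | H ≤ L.comap σ} := by
  let e : {f : H →g L // Function.Surjective f} ≃ {σ : Equiv.Perm V // H ≤ L.comap σ} :=
    { toFun := fun f => ⟨.ofBijective f f.2.bijective_of_finite, fun _ _ h => f.1.map_rel h⟩
      invFun := fun σ => ⟨⟨σ.1, fun h => σ.2 h⟩, σ.1.surjective⟩
      left_inv := fun _ => rfl
      right_inv := fun _ => Subtype.ext (Equiv.ext fun _ => rfl) }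
  rw [Nat.card_congr e, Nat.card_eq_fintype_card, Fintype.card_subtype]

theorem sum_card_surjective_hom {V : Type} [Fintype V] [DecidableEq V] (H : SimpleGraph V)
    (j : ℕ) :
    ∑ L : SimpleGraph V with edgeCount L = j, Nat.card {f : H →g L // Function.Surjective f} =
      (Fintype.card V).factorial * if edgeCount H ≤ j then
        (#(⊤ : SimpleGraph V).edgeFinset - edgeCount H).choose (j - edgeCount H) else 0 := by
  have hσ (σ : Equiv.Perm V) : #{L : SimpleGraph V | edgeCount L = j ∧ H ≤ L.comap σ} =
      #{L : SimpleGraph V | H.map σ ≤ L ∧ edgeCount L = j} := by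
    congr 1
    ext L
    simpa [and_comm] using fun _ => (map_le_iff_le_comap σ.toEmbedding H L).symm
  calc ∑ L : SimpleGraph V with edgeCount L = j, Nat.card {f : H →g L // Function.Surjective f}
      = ∑ σ : Equiv.Perm V, #{L : SimpleGraph V | edgeCount L = j ∧ H ≤ L.comap σ} := by
        simp_rw [card_surjective_hom_eq]
        convert sum_card_bipartiteAbove_eq_sum_card_bipartiteBelow (t := univ)
          (r := fun (L : SimpleGraph V) (σ : Equiv.Perm V) => H ≤ L.comap σ) using 3 <;>
          ext <;> simp [bipartiteAbove, bipartiteBelow]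
    _ = _ := by
        simp_rw [hσ, card_supergraphs_edgeCount_eq, ← edgeCount_congr (Iso.map _ H), sum_const,
          card_univ, Fintype.card_perm, smul_eq_mul]

lemma homCount_induce {n : ℕ} (H : SimpleGraph (Fin n)) {W : Type} [Fintype W]
    [DecidableEq W] (L : SimpleGraph W) (S : Finset W) :
    homCount H (L.induce (S : Set W)) = #{f : H →g L | univ.image f ⊆ S} := by
  let e : (H →g L.induce (S : Set W)) ≃ {f : H →g L // univ.image f ⊆ S} :=
    { toFun := fun g => ⟨(Embedding.induce _).toHom.comp g, by simp [subset_iff]⟩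
      invFun := fun f => ⟨fun v => ⟨f.1 v, f.2 (mem_image_of_mem _ (mem_univ v))⟩, f.1.map_rel⟩
      left_inv := fun _ => rfl
      right_inv := fun _ => rfl }
  rw [homCount, Nat.card_congr e, Nat.card_eq_fintype_card, Fintype.card_subtype]

lemma sum_homCount_induce {n : ℕ} (H : SimpleGraph (Fin n)) {W : Type} [Fintype W]
    [DecidableEq W] (L : SimpleGraph W) :
    ∑ S : Finset W, (-1 : ℚ) ^ #Sᶜ * (homCount H (L.induce (S : Set W)) : ℚ) =
      Nat.card {f : H →g L // Function.Surjective f} := by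
  simp_rw [homCount_induce]
  rw [sum_neg_one_pow_card_compl_mul_card_filter_subset, Nat.card_eq_fintype_card,
    Fintype.card_subtype]
  congr 2
  ext f
  rw [mem_filter, mem_filter]
  simp [eq_univ_iff_forall, Function.Surjective]

def InducesProperty (Φ : GraphProperty) (k : ℕ) {V : Type} (G : SimpleGraph V)
    (S : Finset V) : Prop :=
  #S = k ∧ ∃ e : Fin k ≃ (S : Set V), Φ k ((G.induce (S : Set V)).comap e)

lemma indSub_eq_card_filter (Φ : GraphProperty) (k : ℕ) {V : Type} [Fintype V]
    (G : SimpleGraph V) :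
    indSub Φ k G = #{S : Finset V | InducesProperty Φ k G S} := by
  rw [indSub, Nat.card_eq_fintype_card, Fintype.card_subtype]
  congr

lemma exists_comap_of_iso {k : ℕ} (P : SimpleGraph (Fin k) → Prop) {W W' : Type}
    {A : SimpleGraph W} {B : SimpleGraph W'} (ψ : A ≃g B) :
    (∃ e : Fin k ≃ W, P (A.comap e)) → ∃ e : Fin k ≃ W', P (B.comap e) := by
  rintro ⟨e, he⟩
  refine ⟨e.trans ψ.toEquiv, ?_⟩
  convert he using 2
  ext
  exact ψ.map_adj_iff

lemma exists_comap_iff_of_iso {k : ℕ} (P : SimpleGraph (Fin k) → Prop) {W W' : Type}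
    {A : SimpleGraph W} {B : SimpleGraph W'} (ψ : A ≃g B) :
    (∃ e : Fin k ≃ W, P (A.comap e)) ↔ ∃ e : Fin k ≃ W', P (B.comap e) :=
  ⟨exists_comap_of_iso P ψ, exists_comap_of_iso P ψ.symm⟩

noncomputable def SimpleGraph.Embedding.induceMapIso {V V' : Type} {G : SimpleGraph V}
    {G' : SimpleGraph V'} (f : G ↪g G') (S : Finset V) :
    G.induce (S : Set V) ≃g G'.induce (S.map f.toEmbedding : Set V') where
  toEquiv := .ofBijective (fun x => ⟨f x, by simp⟩) <| by
    refine ⟨fun x y h => Subtype.ext (f.injective (congrArg Subtype.val h)), ?_⟩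
    rintro ⟨_, hy⟩
    obtain ⟨x, hx, rfl⟩ := mem_map.mp hy
    exact ⟨⟨x, hx⟩, rfl⟩
  map_rel_iff' := f.map_adj_iff

section

variable {Φ : GraphProperty} {k : ℕ}

lemma inducesProperty_map_iff {V V' : Type} {G : SimpleGraph V} {G' : SimpleGraph V'}
    (f : G ↪g G') (S : Finset V) :
    InducesProperty Φ k G' (S.map f.toEmbedding) ↔ InducesProperty Φ k G S := by
  rw [InducesProperty, InducesProperty, card_map,
    exists_comap_iff_of_iso (Φ k) (f.induceMapIso S)]

lemma indSub_eq_card_filter_of_embedding {V V' : Type} [Fintype V] [Fintype V']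
    {G : SimpleGraph V} {G' : SimpleGraph V'} (f : G ↪g G') :
    indSub Φ k G = #{T : Finset V' | InducesProperty Φ k G' T ∧ T ⊆ univ.map f.toEmbedding} := by
  rw [indSub_eq_card_filter, ← card_map (mapEmbedding f.toEmbedding).toEmbedding]
  congr 1
  ext T
  simp only [mem_map, mem_filter, mem_univ, true_and, subset_map_iff, subset_univ]
  constructor
  · rintro ⟨S, hS, rfl⟩
    exact ⟨(inducesProperty_map_iff f S).mpr hS, S, rfl⟩
  · rintro ⟨hT, S, rfl⟩
    exact ⟨S, (inducesProperty_map_iff f S).mp hT, rfl⟩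

def blowup {V : Type} (G : SimpleGraph V) (β : Type) : SimpleGraph (V × β) := G.comap Prod.fst

def SimpleGraph.Embedding.blowup {V V' : Type} {G : SimpleGraph V} {G' : SimpleGraph V'}
    (f : G ↪g G') (β : Type) : _root_.blowup G β ↪g _root_.blowup G' β where
  toEmbedding := f.toEmbedding.prodMap (.refl β)
  map_rel_iff' := f.map_adj_iff

lemma homCount_blowup {n : ℕ} (H : SimpleGraph (Fin n)) {V : Type} [Fintype V]
    (G : SimpleGraph V) (β : Type) [Fintype β] :
    homCount H (blowup G β) = homCount H G * Fintype.card β ^ n := by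
  let e : (H →g blowup G β) ≃ (H →g G) × (Fin n → β) :=
    { toFun := fun f => (⟨fun v => (f v).1, f.map_rel⟩, fun v => (f v).2)
      invFun := fun p => ⟨fun v => (p.1 v, p.2 v), p.1.map_rel⟩
      left_inv := fun _ => rfl
      right_inv := fun _ => rfl }
  rw [homCount, homCount, Nat.card_congr e, Nat.card_prod,
    Nat.card_eq_fintype_card (α := Fin n → β), Fintype.card_fun, Fintype.card_fin]

lemma card_transversals {α β : Type*} [Fintype α] [DecidableEq α] [Fintype β] :
    #{T : Finset (α × β) | #T = Fintype.card α ∧ T.image Prod.fst = univ} =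
      Fintype.card β ^ Fintype.card α := by
  let graph (τ : α → β) : Finset (α × β) := univ.image fun a => (a, τ a)
  have mem_graph {τ : α → β} {x : α × β} : x ∈ graph τ ↔ τ x.1 = x.2 := by
    constructor
    · rintro hx
      obtain ⟨a, -, rfl⟩ := mem_image.mp hx
      rfl
    · intro hx
      exact mem_image.mpr ⟨x.1, mem_univ _, Prod.ext rfl hx⟩
  have card_graph (τ : α → β) : #(graph τ) = Fintype.card α :=
    card_image_of_injective _ fun a b h => congrArg Prod.fst h
  have graph_injective : Function.Injective graph := fun τ τ' h =>
    funext fun a => (mem_graph.mp (h ▸ mem_graph.mpr rfl : (a, τ a) ∈ graph τ')).symm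
  rw [← Fintype.card_fun, ← card_univ (α := α → β), ← card_image_of_injective _ graph_injective]
  congr 1
  ext T
  simp only [mem_filter, mem_univ, true_and, mem_image]
  constructor
  · rintro ⟨hcard, himage⟩
    have (a : α) : ∃ b, (a, b) ∈ T := by
      obtain ⟨x, hx, rfl⟩ := mem_image.mp (himage ▸ mem_univ a : a ∈ T.image Prod.fst)
      exact ⟨x.2, hx⟩
    choose τ hτ using this
    refine ⟨τ, eq_of_subset_of_card_le (fun x hx => ?_) (by rw [hcard, card_graph])⟩
    obtain ⟨a, -, rfl⟩ := mem_image.mp hx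
    exact hτ a
  · rintro ⟨τ, rfl⟩
    refine ⟨card_graph τ, ?_⟩
    simp [graph, image_image, Function.comp_def]

lemma inducesProperty_blowup_iff (hΦ : Invariant Φ) {β : Type} {L : SimpleGraph (Fin k)}
    {T : Finset (Fin k × β)} (hT : T.image Prod.fst = univ) :
    InducesProperty Φ k (blowup L β) T ↔ #T = k ∧ Φ k L := by
  refine and_congr_right fun hcard => ?_
  have hsurj : Function.Surjective fun x : (T : Set (Fin k × β)) => x.1.1 := by
    intro v
    obtain ⟨x, hx, rfl⟩ := mem_image.mp (hT ▸ mem_univ v : v ∈ T.image Prod.fst)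
    exact ⟨⟨x, hx⟩, rfl⟩
  let ψ : (blowup L β).induce (T : Set (Fin k × β)) ≃g L :=
    { toEquiv := .ofBijective _ ((Fintype.bijective_iff_surjective_and_card _).mpr
        ⟨hsurj, by simp [hcard]⟩)
      map_rel_iff' := Iff.rfl }
  rw [exists_comap_iff_of_iso (Φ k) ψ]
  exact ⟨fun ⟨e, he⟩ => (hΦ _ _ _ ⟨Iso.comap e L⟩).mp he, fun h => ⟨.refl _, h⟩⟩

lemma sum_indSub_blowup_induce (hΦ : Invariant Φ) (L : SimpleGraph (Fin k)) (β : Type)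
    [Fintype β] :
    ∑ S : Finset (Fin k),
        (-1 : ℚ) ^ #Sᶜ * (indSub Φ k (blowup (L.induce (S : Set (Fin k))) β) : ℚ) =
      if Φ k L then (Fintype.card β : ℚ) ^ k else 0 := by
  have hsub (S : Finset (Fin k)) : indSub Φ k (blowup (L.induce (S : Set (Fin k))) β) =
      #{T ∈ ({T | InducesProperty Φ k (blowup L β) T} : Finset _) | T.image Prod.fst ⊆ S} := by
    rw [indSub_eq_card_filter_of_embedding ((Embedding.induce (S : Set (Fin k))).blowup β)]
    congr 1
    ext T
    simp only [mem_filter, mem_univ, true_and]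
    refine and_congr_right fun _ => ?_
    simp [subset_iff, Embedding.blowup]
  simp_rw [hsub, sum_neg_one_pow_card_compl_mul_card_filter_subset]
  split_ifs with hL
  · have := card_transversals (α := Fin k) (β := β)
    rw [Fintype.card_fin] at this
    rw [← Nat.cast_pow, ← this]
    congr 2
    ext T
    simp only [mem_filter, mem_univ, true_and]
    exact ⟨fun ⟨h, hT⟩ => ⟨((inducesProperty_blowup_iff hΦ hT).mp h).1, hT⟩,
      fun ⟨h, hT⟩ => ⟨(inducesProperty_blowup_iff hΦ hT).mpr ⟨h, hL⟩, hT⟩⟩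
  · rw [Nat.cast_eq_zero, card_eq_zero, filter_eq_empty_iff]
    intro T hT himage
    exact hL ((inducesProperty_blowup_iff hΦ himage).mp (by simpa using hT)).2

def IsHomExpansion (Φ : GraphProperty) (k : ℕ) (a : (Σ n, GraphClass n) → ℚ) : Prop :=
  ∀ (V : Type) [Fintype V] (G : SimpleGraph V),
    (indSub Φ k G : ℚ) = ∑ᶠ c : Σ n, GraphClass n, a c * (classHomCount c.2 G : ℚ)

noncomputable def gradedHomSum (a : (Σ n, GraphClass n) → ℚ) (n : ℕ) {V : Type} [Fintype V]
    (G : SimpleGraph V) : ℚ :=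
  ∑ c : GraphClass n, a ⟨n, c⟩ * classHomCount c G

lemma finsum_classHomCount_blowup {a : (Σ n, GraphClass n) → ℚ} {N : ℕ}
    (hN : ∀ c, a c ≠ 0 → c.1 ≤ N) {V : Type} [Fintype V] (G : SimpleGraph V) (β : Type)
    [Fintype β] :
    ∑ᶠ c : Σ n, GraphClass n, a c * (classHomCount c.2 (blowup G β) : ℚ) =
      ∑ n ∈ range (N + 1), gradedHomSum a n G * (Fintype.card β : ℚ) ^ n := by
  rw [finsum_eq_sum_of_support_subset (s := (range (N + 1)).sigma fun _ => univ)]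
  · rw [sum_sigma]
    refine sum_congr rfl fun n _ => ?_
    rw [gradedHomSum, sum_mul]
    refine sum_congr rfl fun c _ => ?_
    rw [classHomCount, classHomCount, homCount_blowup]
    push_cast
    ring
  · intro c hc
    simpa [Nat.lt_succ_iff] using hN c (left_ne_zero_of_mul hc)

theorem sum_coeff_mul_card_surjective_hom (hΦ : Invariant Φ) {a : (Σ n, GraphClass n) → ℚ}
    (ha : (Function.support a).Finite)
    (heq : IsHomExpansion Φ k a) (L : SimpleGraph (Fin k)) :
    ∑ c : GraphClass k, a ⟨k, c⟩ * (Nat.card {f : c.out →g L // Function.Surjective f} : ℚ) =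
      if Φ k L then 1 else 0 := by
  obtain ⟨N, hkN, hN⟩ : ∃ N, k ≤ N ∧ ∀ c, a c ≠ 0 → c.1 ≤ N :=
    ⟨max k (ha.toFinset.sup Sigma.fst), le_max_left _ _,
      fun c hc => (le_sup (ha.mem_toFinset.mpr hc)).trans (le_max_right _ _)⟩
  -- `sum_indSub_blowup_induce` as an identity of polynomials in the blow-up size `m`.
  have hpoly (m : ℕ) :
      ∑ n ∈ range (N + 1), (∑ S : Finset (Fin k),
          (-1 : ℚ) ^ #Sᶜ * gradedHomSum a n (L.induce (S : Set (Fin k)))) * (m : ℚ) ^ n =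
        ∑ n ∈ range (N + 1), (if n = k then if Φ k L then 1 else 0 else 0) * (m : ℚ) ^ n := by
    have := sum_indSub_blowup_induce hΦ L (Fin m)
    simp_rw [heq _, finsum_classHomCount_blowup hN, Fintype.card_fin, mul_sum] at this
    rw [sum_comm] at this
    simp_rw [sum_mul, mul_assoc]
    rw [this]
    simp [ite_mul, Nat.lt_succ_of_le hkN]
  have := eq_of_forall_natCast_sum_mul_pow_eq hpoly k (by omega)
  simp only [if_true] at this
  rw [← this]
  simp_rw [gradedHomSum, classHomCount, mul_sum]
  rw [sum_comm]
  refine sum_congr rfl fun c _ => ?_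
  rw [← sum_homCount_induce, mul_sum]
  refine sum_congr rfl fun S _ => ?_
  simp only [homCount]
  ring

theorem fVec_eq_sum (hΦ : Invariant Φ) {a : (Σ n, GraphClass n) → ℚ}
    (ha : (Function.support a).Finite)
    (heq : IsHomExpansion Φ k a) (j : ℕ) :
    (fVec Φ k j : ℚ) = k.factorial * ∑ c : GraphClass k, a ⟨k, c⟩ *
      if edgeCount c.out ≤ j then
        ((k * (k - 1) / 2 - edgeCount c.out).choose (j - edgeCount c.out) : ℚ) else 0 := by
  calc (fVec Φ k j : ℚ)
      = ∑ L : SimpleGraph (Fin k) with edgeCount L = j, if Φ k L then 1 else 0 := by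
        rw [fVec, Nat.card_eq_fintype_card, Fintype.card_subtype, sum_boole, filter_filter]
    _ = ∑ c : GraphClass k, a ⟨k, c⟩ * ∑ L : SimpleGraph (Fin k) with edgeCount L = j,
          (Nat.card {f : c.out →g L // Function.Surjective f} : ℚ) := by
        simp_rw [← sum_coeff_mul_card_surjective_hom hΦ ha heq, mul_sum]
        exact sum_comm
    _ = _ := by
        simp_rw [← Nat.cast_sum, sum_card_surjective_hom, card_edgeFinset_top_fin, mul_sum,
          Fintype.card_fin]
        refine sum_congr rfl fun c _ => ?_
        split_ifs <;> push_cast <;> ring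

end

theorem stmt7_general (Φ : GraphProperty) (hΦ : Invariant Φ) (k : ℕ)
    (a : (Σ n, GraphClass n) → ℚ) (ha : (Function.support a).Finite)
    (heq : ∀ (V : Type) [Fintype V], ∀ G : SimpleGraph V,
      (indSub Φ k G : ℚ) = ∑ᶠ c : Σ n, GraphClass n, a c * (classHomCount c.2 G : ℚ))
    (i : ℕ) (hi : i ≤ k * (k - 1) / 2) :
    (Nat.factorial k : ℚ) *
        ∑ᶠ (c : GraphClass k) (_ : edgeCount (Quotient.out c) = i), a ⟨k, c⟩ =
      hVec Φ k i := by
  rw [hVec, finsum_eq_sum_of_fintype]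
  simp_rw [fVec_eq_sum hΦ ha heq, finsum_eq_if, mul_sum]
  rw [sum_comm]
  refine sum_congr rfl fun c _ => ?_
  rw [← mul_boole, ← sum_neg_one_pow_mul_choose_mul_choose hi, mul_sum, mul_sum]
  exact sum_congr rfl fun j _ => by ring

/-- `k! · Σ_{K ∈ H_i} a(K) = h^{Φ,k}_i`, where the sum is over all isomorphism classes of
graphs on `k` vertices with exactly `i` edges. -/
theorem stmt7 (Φ : GraphProperty) (hΦ : Invariant Φ) (k : ℕ) (hk : 0 < k)
    (a : (Σ n, GraphClass n) → ℚ) (ha : (Function.support a).Finite)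
    (heq : ∀ (V : Type) [Fintype V], ∀ G : SimpleGraph V,
      (indSub Φ k G : ℚ) = ∑ᶠ c : Σ n, GraphClass n, a c * (classHomCount c.2 G : ℚ))
    (i : ℕ) (hi : i ≤ k * (k - 1) / 2) :
    (Nat.factorial k : ℚ) *
        ∑ᶠ (c : GraphClass k) (_ : edgeCount (Quotient.out c) = i), a ⟨k, c⟩ =
      hVec Φ k i :=
  stmt7_general Φ hΦ k a ha heq i hi
end

section
/- Let p be a nonzero univariate polynomial with rational (or real) coefficients that has exactly w nonzero coefficients, where w ≥ 1. Then there exists j ∈ {0,…,w−1} such that the j-th derivative of p does not vanish at −1, i.e., p^{(j)}(−1) ≠ 0. -/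
/-!
By Descartes' rule of signs, a root `η > 0` of multiplicity `m` of a nonzero polynomial forces
at least `m` sign changes among its coefficients, hence at least `m + 1` nonzero coefficients;
substituting `-X` gives the same bound at negative roots. So `-1` is a root of `p` of multiplicity
less than `w`, whereas the vanishing of `p, p', …, p^{(w-1)}` at `-1` would make it at least `w`.
-/

open Polynomial

namespace Polynomial

open Finset

theorem signVariations_lt_card_support {R : Type*} [Semiring R] [LinearOrder R] {P : R[X]}
    (hP : P ≠ 0) : P.signVariations < #P.support := by
  induction h : #P.support generalizing P with
  | zero => exact absurd (card_support_eq_zero.mp h) hP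
  | succ n ih =>
    by_cases hlead : P.eraseLead = 0
    · obtain ⟨k, c, -, rfl⟩ := card_support_eq_one.mp
        (card_support_eq_one_of_eraseLead_eq_zero hP hlead)
      simp [C_mul_X_pow_eq_monomial]
    · have := ih hlead (card_support_eraseLead' h)
      have := P.signVariations_le_eraseLead_succ
      omega

section StrictOrderedRing

variable {R : Type*} [Ring R] [LinearOrder R] [IsStrictOrderedRing R] {η : R}

theorem le_signVariations_X_sub_C_pow_mul (hη : 0 < η) {Q : R[X]} (hQ : Q ≠ 0) (n : ℕ) :
    n ≤ ((X - C η) ^ n * Q).signVariations := by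
  induction n with
  | zero => exact Nat.zero_le _
  | succ n ih =>
    rw [pow_succ', mul_assoc]
    exact (Nat.succ_le_succ ih).trans <|
      succ_signVariations_le_X_sub_C_mul hη (mul_ne_zero (pow_ne_zero _ (X_sub_C_ne_zero η)) hQ)

end StrictOrderedRing

theorem support_comp_C_mul_X {R : Type*} [CommSemiring R] (p : R[X]) {r : R}
    (hr : r ∈ nonZeroDivisors R) : (p.comp (C r * X)).support = p.support := by
  ext n
  simp [mul_right_mem_nonZeroDivisors_eq_zero_iff (pow_mem hr n)]

section CommStrictOrderedRing

variable {R : Type*} [CommRing R] [LinearOrder R] [IsStrictOrderedRing R] {p : R[X]}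

theorem rootMultiplicity_lt_card_support_of_pos {η : R} (hη : 0 < η) (hp : p ≠ 0) :
    p.rootMultiplicity η < #p.support := by
  have hq : p /ₘ (X - C η) ^ p.rootMultiplicity η ≠ 0 := by
    intro h
    apply hp
    rw [← pow_mul_divByMonic_rootMultiplicity_eq p η, h, mul_zero]
  calc p.rootMultiplicity η ≤ p.signVariations := by
        conv_rhs => rw [← pow_mul_divByMonic_rootMultiplicity_eq p η]
        exact le_signVariations_X_sub_C_pow_mul hη hq _
    _ < #p.support := signVariations_lt_card_support hp

theorem rootMultiplicity_lt_card_support {a : R} (ha : a ≠ 0) (hp : p ≠ 0) :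
    p.rootMultiplicity a < #p.support := by
  rcases ha.lt_or_gt with hneg | hpos
  · have hunit : (-1 : R) ∈ nonZeroDivisors R := isUnit_neg_one.mem_nonZeroDivisors
    have hp' : p.comp (C (-1) * X) ≠ 0 := by
      rwa [Ne, comp_C_mul_X_eq_zero_iff hunit]
    have hlt := rootMultiplicity_lt_card_support_of_pos (neg_pos.mpr hneg) hp'
    rwa [support_comp_C_mul_X p hunit, ← add_zero (C (-1) * X), ← C_0,
      rootMultiplicity_comp_C_mul_X_add_C p _ _ _ isUnit_neg_one, neg_one_mul, neg_neg,
      add_zero] at hlt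
  · exact rootMultiplicity_lt_card_support_of_pos hpos hp

end CommStrictOrderedRing

end Polynomial

/-- A nonzero polynomial with exactly `w ≥ 1` nonzero coefficients has a derivative of
order `j < w` that does not vanish at `−1`. -/
theorem stmt9 (p : Polynomial ℚ) (hp : p ≠ 0) (w : ℕ)
    (hw : p.support.card = w) (hw1 : 1 ≤ w) :
    ∃ j, j < w ∧ (Polynomial.derivative^[j] p).eval (-1) ≠ 0 := by
  by_contra! h
  have hmult : w - 1 < p.rootMultiplicity (-1) :=
    lt_rootMultiplicity_of_isRoot_iterate_derivative hp fun m hm ↦ h m (by omega)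
  have := rootMultiplicity_lt_card_support (neg_ne_zero.mpr one_ne_zero) hp
  omega
end

section
/- Let F be a finite simple graph with an edge {u, v} such that u has no false twin in F and v has no false twin in F (i.e., {u} and {v} are singleton blocks of the false-twin partition of F). Then {u, v} is a critical edge of F: for all nonnegative integers x and y, the exploded graph F^{x,y}_{u,v} contains no induced subgraph isomorphic to F. -/
open SimpleGraph

/-- The vertex type of the exploded graph `H^{x,y}_{u,v}`: the vertices of `H` other than
`u` and `v`, together with `x` copies of `u` and `y` copies of `v`. -/
abbrev ExplodedVertex (V : Type) (u v : V) (x y : ℕ) : Type :=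
  {w : V // w ≠ u ∧ w ≠ v} ⊕ (Fin x ⊕ Fin y)

/-- Auxiliary (one-sided) adjacency relation generating the exploded graph. -/
def explodeRel {V : Type} (H : SimpleGraph V) (u v : V) (x y : ℕ) :
    ExplodedVertex V u v x y → ExplodedVertex V u v x y → Prop
  | Sum.inl a, Sum.inl b => H.Adj a.1 b.1
  | Sum.inl a, Sum.inr (Sum.inl _) => H.Adj a.1 u
  | Sum.inl a, Sum.inr (Sum.inr _) => H.Adj a.1 v
  | _, _ => False

/-- The exploded graph `H^{x,y}_{u,v}`: delete the edge `{u,v}`, replace `u` by `x`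
pairwise nonadjacent copies adjacent exactly to the former neighbors of `u` other than
`v`, and replace `v` by `y` pairwise nonadjacent copies adjacent exactly to the former
neighbors of `v` other than `u`. -/
def explode {V : Type} (H : SimpleGraph V) (u v : V) (x y : ℕ) :
    SimpleGraph (ExplodedVertex V u v x y) :=
  SimpleGraph.fromRel (explodeRel H u v x y)

/-!
An induced copy of `F` in `F^{x,y}_{u,v}`, composed with the projection of the explosion onto
`V`, is a map `f : V → V` with `F.Adj a b ↔ (F - uv).Adj (f a) (f b)`. Such an `f` reflects
equality of neighbourhoods: distinct false twins `f a`, `f b` are neither `u` nor `v`, so deleting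
`uv` does not touch their neighbourhoods. By pigeonhole `f^[i] = f^[i + p]` for some `p > 0`, so
every `w` is a false twin of `f^[p] w`, and `f^[p]` fixes `u` and `v`. Since `f` is also an
endomorphism of `F`, the vertices `f^[p-1] u` and `f^[p-1] v` are adjacent in `F`, yet their images
`u` and `v` are not adjacent in `F - uv`.
-/

namespace SimpleGraph

variable {V : Type*} {F : SimpleGraph V} {u v : V} {f : V → V}

lemma adj_iterate_of_adj (hf : ∀ a b, F.Adj a b → F.Adj (f a) (f b)) (n : ℕ) {a b : V}
    (h : F.Adj a b) : F.Adj (f^[n] a) (f^[n] b) := by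
  induction n generalizing a b with
  | zero => exact h
  | succ n ih => exact ih (hf a b h)

lemma neighborSet_eq_of_neighborSet_iterate_eq
    (hf : ∀ a b, F.neighborSet (f a) = F.neighborSet (f b) → F.neighborSet a = F.neighborSet b)
    (n : ℕ) {a b : V} (h : F.neighborSet (f^[n] a) = F.neighborSet (f^[n] b)) :
    F.neighborSet a = F.neighborSet b := by
  induction n generalizing a b with
  | zero => exact h
  | succ n ih => exact hf a b (ih h)

lemma deleteEdges_singleton_adj_iff {a w : V} (hau : a ≠ u) (hav : a ≠ v) :
    (F.deleteEdges {s(u, v)}).Adj a w ↔ F.Adj a w := by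
  simp [hau, hav]

lemma neighborSet_eq_of_neighborSet_map_eq
    (hu : ∀ w, F.neighborSet w = F.neighborSet u → w = u)
    (hv : ∀ w, F.neighborSet w = F.neighborSet v → w = v)
    (hf : ∀ a b, F.Adj a b ↔ (F.deleteEdges {s(u, v)}).Adj (f a) (f b)) {a b : V}
    (h : F.neighborSet (f a) = F.neighborSet (f b)) : F.neighborSet a = F.neighborSet b := by
  by_cases hab : f a = f b
  · ext w
    rw [mem_neighborSet, mem_neighborSet, hf, hf, hab]
  have hau : f a ≠ u := fun hau => hab (hau.trans (hu _ (hau ▸ h).symm).symm)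
  have hav : f a ≠ v := fun hav => hab (hav.trans (hv _ (hav ▸ h).symm).symm)
  have hbu : f b ≠ u := fun hbu => hab ((hu _ (hbu ▸ h)).trans hbu.symm)
  have hbv : f b ≠ v := fun hbv => hab ((hv _ (hbv ▸ h)).trans hbv.symm)
  ext w
  rw [mem_neighborSet, mem_neighborSet, hf, hf, deleteEdges_singleton_adj_iff hau hav,
    deleteEdges_singleton_adj_iff hbu hbv, ← mem_neighborSet, h, mem_neighborSet]

lemma exists_iterate_neighborSet_eq [Finite V]
    (hf : ∀ a b, F.neighborSet (f a) = F.neighborSet (f b) → F.neighborSet a = F.neighborSet b) :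
    ∃ p, 0 < p ∧ ∀ w, F.neighborSet (f^[p] w) = F.neighborSet w := by
  obtain ⟨i, j, hij, hfij⟩ := Finite.exists_ne_map_eq_of_infinite fun n => f^[n]
  wlog hlt : i < j generalizing i j
  · exact this j i hij.symm hfij.symm (by omega)
  refine ⟨j - i, by omega, fun w => neighborSet_eq_of_neighborSet_iterate_eq hf i ?_⟩
  rw [← Function.iterate_add_apply, Nat.add_sub_cancel' hlt.le]
  exact congrArg (fun g => F.neighborSet (g w)) hfij.symm

theorem not_forall_adj_iff_deleteEdges_adj_map [Finite V] (huv : F.Adj u v)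
    (hu : ∀ w, F.neighborSet w = F.neighborSet u → w = u)
    (hv : ∀ w, F.neighborSet w = F.neighborSet v → w = v) (f : V → V) :
    ¬ ∀ a b, F.Adj a b ↔ (F.deleteEdges {s(u, v)}).Adj (f a) (f b) := by
  intro hf
  obtain ⟨p, hp, hfix⟩ :=
    exists_iterate_neighborSet_eq fun a b => neighborSet_eq_of_neighborSet_map_eq hu hv hf
  have hpu : f^[p] u = u := hu _ (hfix u)
  have hpv : f^[p] v = v := hv _ (hfix v)
  have hadj := adj_iterate_of_adj (fun a b h => ((hf a b).1 h).1) (p - 1) huv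
  have hadj' := (hf _ _).1 hadj
  rw [← Function.iterate_succ_apply' f, ← Function.iterate_succ_apply' f,
    show (p - 1).succ = p by omega, hpu, hpv] at hadj'
  exact ((deleteEdges_adj ..).1 hadj').2 rfl

end SimpleGraph

def explodeProj {V : Type} (u v : V) (x y : ℕ) : ExplodedVertex V u v x y → V :=
  Sum.elim Subtype.val (Sum.elim (fun _ => u) (fun _ => v))

lemma explode_adj {V : Type} (H : SimpleGraph V) (u v : V) (x y : ℕ)
    (s t : ExplodedVertex V u v x y) :
    (explode H u v x y).Adj s t ↔
      (H.deleteEdges {s(u, v)}).Adj (explodeProj u v x y s) (explodeProj u v x y t) := by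
  rcases s with ⟨a, ha⟩ | i | i <;> rcases t with ⟨b, hb⟩ | j | j <;>
    simp [explode, explodeRel, explodeProj, adj_comm, *]
  exact H.ne_of_adj

/-- If `{u,v}` is an edge of `F` and neither `u` nor `v` has a false twin in `F`, then
`{u,v}` is a critical edge: no explosion `F^{x,y}_{u,v}` contains an induced subgraph
isomorphic to `F`. -/
theorem stmt16 {V : Type} [Fintype V] (F : SimpleGraph V) (u v : V) (huv : F.Adj u v)
    (hu : ¬ ∃ u', u' ≠ u ∧ ∀ w, F.Adj u' w ↔ F.Adj u w)
    (hv : ¬ ∃ v', v' ≠ v ∧ ∀ w, F.Adj v' w ↔ F.Adj v w)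
    (x y : ℕ) :
    ¬ ∃ S : Set (ExplodedVertex V u v x y),
        Nonempty (((explode F u v x y).induce S) ≃g F) := by
  have eq_of_neighborSet_eq {c : V} (hc : ¬ ∃ c', c' ≠ c ∧ ∀ w, F.Adj c' w ↔ F.Adj c w)
      (w : V) (h : F.neighborSet w = F.neighborSet c) : w = c :=
    by_contra fun hne => hc ⟨w, hne, fun z => Set.ext_iff.mp h z⟩
  rintro ⟨S, ⟨e⟩⟩
  refine F.not_forall_adj_iff_deleteEdges_adj_map huv (eq_of_neighborSet_eq hu)
    (eq_of_neighborSet_eq hv) (fun w => explodeProj u v x y (e.symm w)) fun a b =>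
    e.symm.map_adj_iff.symm.trans (explode_adj F u v x y _ _)
end

section
/- Let H be a finite simple graph with at least 2 vertices. Then H has a critical edge or the complement graph H̄ has a critical edge; that is, there exist a graph F ∈ {H, H̄} and an edge {u,v} ∈ E(F) such that for all nonnegative integers x and y, the exploded graph F^{x,y}_{u,v} contains no induced subgraph isomorphic to F. -/
open SimpleGraph

/-!
The explosion `explode F u v x y` is the pullback of `F - uv` along the map `base` that sends
the copies of `u` to `u` and those of `v` to `v`. So an induced copy of `F` in it gives a map
`g : V → V` with `F = (F - uv).comap g`, injective off the fibres over `u` and `v`, and it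
suffices to make such a map injective: a finite graph does not embed into a proper subgraph.

If `F` is twin-free (distinct vertices have distinct neighbourhoods), `g` is already injective.
If `u` and `v` are twins in `F - uv`, restrict to the forward orbit `L` of `{u, v}` under `g`:
`g` maps `L \ g⁻¹{u, v}` bijectively onto `L \ {u, v}`, so exactly two points of `L` lie over
`{u, v}`, and sending them to `u` and `v` makes `g` injective on `L`. Finally, if no edge of `H`
joins two vertices that are twins once it is deleted, then `Hᶜ` is twin-free, and having at
least two vertices it has an edge.
-/

namespace SimpleGraph

variable {V W : Type*}

lemma isEmpty_embedding_of_lt [Finite V] {G G' : SimpleGraph V} (h : G' < G) :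
    IsEmpty (G ↪g G') :=
  ⟨fun f => (Finite.card_le_of_embedding f.mapEdgeSet).not_gt
    (Set.ncard_lt_ncard (edgeSet_ssubset_edgeSet.mpr h))⟩

lemma deleteEdges_singleton_lt {G : SimpleGraph V} {u v : V} (huv : G.Adj u v) :
    G.deleteEdges {s(u, v)} < G :=
  lt_of_le_of_ne (deleteEdges_le _) fun h => by
    have := h ▸ huv
    simp at this

lemma induce_lt_induce {F G : SimpleGraph V} (hGF : G ≤ F) {u v : V} (huv : F.Adj u v)
    (hnuv : ¬ G.Adj u v) {L : Set V} (hu : u ∈ L) (hv : v ∈ L) : G.induce L < F.induce L :=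
  lt_of_le_of_ne (comap_monotone _ hGF) fun h =>
    hnuv <| by
      simpa using congrArg (fun K : SimpleGraph L => K.Adj ⟨u, hu⟩ ⟨v, hv⟩) h ▸ huv

lemma adj_congr_of_neighborSet_eq {G : SimpleGraph V} {a a' b b' : V}
    (ha : G.neighborSet a = G.neighborSet a') (hb : G.neighborSet b = G.neighborSet b') :
    G.Adj a b ↔ G.Adj a' b' := by
  rw [← mem_neighborSet, ha, mem_neighborSet, adj_comm, ← mem_neighborSet, hb,
    mem_neighborSet, adj_comm]

lemma injective_of_eq_comap {F : SimpleGraph V} {G : SimpleGraph W} {g : V → W}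
    (hF : Function.Injective F.neighborSet) (hg : F = G.comap g) : Function.Injective g := by
  intro p q hpq
  apply hF
  ext z
  simp only [mem_neighborSet, hg, comap_adj, hpq]

lemma ne_comap_of_injective_neighborSet [Finite V] {F G : SimpleGraph V} (hGF : G < F)
    (hF : Function.Injective F.neighborSet) (g : V → V) : F ≠ G.comap g := by
  rintro rfl
  exact (isEmpty_embedding_of_lt hGF).false ⟨⟨g, injective_of_eq_comap hF rfl⟩, Iff.rfl⟩

lemma exists_mapsTo_subset_image_union (g : V → V) (u v : V) :
    ∃ L : Set V, u ∈ L ∧ v ∈ L ∧ Set.MapsTo g L L ∧ L ⊆ g '' L ∪ {u, v} := by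
  refine ⟨Set.range (g^[·] u) ∪ .range (g^[·] v), .inl ⟨0, rfl⟩, .inr ⟨0, rfl⟩, ?_, ?_⟩
  · rintro _ (⟨k, rfl⟩ | ⟨k, rfl⟩)
    exacts [.inl ⟨k + 1, Function.iterate_succ_apply' g k u⟩,
      .inr ⟨k + 1, Function.iterate_succ_apply' g k v⟩]
  · rintro _ (⟨_ | k, rfl⟩ | ⟨_ | k, rfl⟩)
    · exact .inr (.inl rfl)
    · exact .inl ⟨_, .inl ⟨k, rfl⟩, (Function.iterate_succ_apply' g k u).symm⟩
    · exact .inr (.inr rfl)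
    · exact .inl ⟨_, .inr ⟨k, rfl⟩, (Function.iterate_succ_apply' g k v).symm⟩

lemma ncard_inter_preimage_pair_eq_two [Finite V] {g : V → V} {u v : V} (huv : u ≠ v)
    (hinj : Set.InjOn g (g ⁻¹' {u, v}ᶜ)) {L : Set V} (hu : u ∈ L) (hv : v ∈ L)
    (hmaps : Set.MapsTo g L L) (hcover : L ⊆ g '' L ∪ {u, v}) :
    (L ∩ g ⁻¹' {u, v}).ncard = 2 := by
  have himage : g '' (L \ g ⁻¹' {u, v}) = L \ {u, v} := by
    ext w
    constructor
    · rintro ⟨p, ⟨hp, hpuv⟩, rfl⟩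
      exact ⟨hmaps hp, hpuv⟩
    · rintro ⟨hw, hwuv⟩
      obtain ⟨p, hp, rfl⟩ := (hcover hw).resolve_right hwuv
      exact ⟨p, ⟨hp, hwuv⟩, rfl⟩
  have huvL : {u, v} ⊆ L := Set.insert_subset hu (Set.singleton_subset_iff.mpr hv)
  have hsplit := Set.ncard_inter_add_ncard_sdiff_eq_ncard L (g ⁻¹' {u, v})
  have hdiff : (L \ {u, v}).ncard = L.ncard - 2 := by
    rw [Set.ncard_sdiff huvL, Set.ncard_pair huv]
  have hL : 2 ≤ L.ncard := Set.ncard_pair huv ▸ Set.ncard_le_ncard huvL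
  rw [← himage, (hinj.mono fun _ hp => hp.2).ncard_image] at hdiff
  omega

lemma exists_injOn_neighborSet_eq [Finite V] {G : SimpleGraph V} {u v : V} (huv : u ≠ v)
    (htwin : G.neighborSet u = G.neighborSet v) {g : V → V}
    (hinj : Set.InjOn g (g ⁻¹' {u, v}ᶜ)) {L : Set V} (hu : u ∈ L) (hv : v ∈ L)
    (hmaps : Set.MapsTo g L L) (hcover : L ⊆ g '' L ∪ {u, v}) :
    ∃ h : V → V, Set.MapsTo h L L ∧ Set.InjOn h L ∧
      ∀ p ∈ L, G.neighborSet (h p) = G.neighborSet (g p) := by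
  classical
  obtain ⟨p₁, p₂, -, hfiber⟩ :=
    Set.ncard_eq_two.mp (ncard_inter_preimage_pair_eq_two huv hinj hu hv hmaps hcover)
  have hC : ∀ p ∈ L, (g p = u ∨ g p = v) ↔ (p = p₁ ∨ p = p₂) := fun p hp => by
    simpa [hp] using Set.ext_iff.mp hfiber p
  refine ⟨fun p => if p = p₁ then u else if p = p₂ then v else g p, ?_, ?_, ?_⟩
  · intro p hp
    dsimp only
    split_ifs
    exacts [hu, hv, hmaps hp]
  · intro p hp q hq hpq
    have := hC p hp
    have := hC q hq
    have : g p ≠ u → g p ≠ v → g q ≠ u → g q ≠ v → g p = g q → p = q :=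
      fun hpu hpv hqu hqv => hinj (by simp [hpu, hpv]) (by simp [hqu, hqv])
    dsimp only at hpq
    split_ifs at hpq <;> grind
  · intro p hp
    have := hC p hp
    dsimp only
    split_ifs <;> grind

lemma ne_comap_of_neighborSet_eq [Finite V] {F G : SimpleGraph V} (hGF : G ≤ F) {u v : V}
    (huv : F.Adj u v) (htwin : G.neighborSet u = G.neighborSet v) {g : V → V}
    (hinj : Set.InjOn g (g ⁻¹' {u, v}ᶜ)) : F ≠ G.comap g := by
  rintro rfl
  obtain ⟨L, hu, hv, hmaps, hcover⟩ := exists_mapsTo_subset_image_union g u v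
  obtain ⟨h, hmapsh, hinjh, hnbhd⟩ :=
    exists_injOn_neighborSet_eq huv.ne htwin hinj hu hv hmaps hcover
  have hnuv : ¬ G.Adj u v := fun hG => G.irrefl (v := v) (htwin ▸ hG : v ∈ G.neighborSet v)
  refine (isEmpty_embedding_of_lt (induce_lt_induce hGF huv hnuv hu hv)).false
    ⟨⟨hmapsh.restrict, hmapsh.restrict_inj.mpr hinjh⟩, fun {p q} => ?_⟩
  exact adj_congr_of_neighborSet_eq (hnbhd p p.2) (hnbhd q q.2)

lemma exists_adj_of_injective_neighborSet [Nontrivial V] {F : SimpleGraph V}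
    (hF : Function.Injective F.neighborSet) : ∃ u v, F.Adj u v := by
  obtain ⟨a, b, hab⟩ := exists_pair_ne V
  obtain ⟨z, hz⟩ := not_forall.mp (mt Set.ext (hF.ne hab))
  by_cases ha : F.Adj a z
  · exact ⟨a, z, ha⟩
  · exact ⟨b, z, by simpa [ha] using hz⟩

lemma injective_neighborSet_compl {H : SimpleGraph V}
    (h : ∀ u v, H.Adj u v →
      (H.deleteEdges {s(u, v)}).neighborSet u ≠ (H.deleteEdges {s(u, v)}).neighborSet v) :
    Function.Injective Hᶜ.neighborSet := by
  intro p q hpq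
  by_contra hne
  have hadj : H.Adj p q := by
    have := Set.ext_iff.mp hpq q
    simp only [mem_neighborSet, compl_adj, ne_eq, not_true, false_and, iff_false, not_and,
      not_not] at this
    exact this hne
  apply h p q hadj
  ext z
  have := Set.ext_iff.mp hpq z
  simp only [mem_neighborSet, compl_adj, deleteEdges_adj, Set.mem_singleton_iff,
    Sym2.eq_iff] at this ⊢
  grind

end SimpleGraph

namespace ExplodedVertex

variable {V : Type} {u v : V} {x y : ℕ}

def base (u v : V) : ExplodedVertex V u v x y → V
  | .inl a => a.1
  | .inr (.inl _) => u
  | .inr (.inr _) => v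

lemma injOn_base :
    Set.InjOn (base u v) (base u v ⁻¹' {u, v}ᶜ : Set (ExplodedVertex V u v x y)) := by
  rintro (a | i | j) hs (b | i' | j') ht hst <;> simp_all [base, Subtype.ext_iff]

end ExplodedVertex

open ExplodedVertex

section Explode

variable {V : Type} {F : SimpleGraph V} {u v : V}

lemma explode_eq_comap (x y : ℕ) :
    explode F u v x y = (F.deleteEdges {s(u, v)}).comap (base u v) := by
  ext s t
  rcases s with ⟨a, hau, hav⟩ | i | j <;> rcases t with ⟨b, hbu, hbv⟩ | i' | j' <;>
    simp [explode, explodeRel, base, adj_comm, *]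
  exact Adj.ne

lemma eq_comap_base_comp_of_embedding_explode {x y : ℕ} (f : F ↪g explode F u v x y) :
    F = (F.deleteEdges {s(u, v)}).comap (base u v ∘ f) := by
  rw [← comap_comap, ← explode_eq_comap, f.comap_eq]

theorem isEmpty_embedding_explode_of_injective_neighborSet [Finite V] (huv : F.Adj u v)
    (hF : Function.Injective F.neighborSet) (x y : ℕ) : IsEmpty (F ↪g explode F u v x y) :=
  ⟨fun f => ne_comap_of_injective_neighborSet (deleteEdges_singleton_lt huv) hF _
    (eq_comap_base_comp_of_embedding_explode f)⟩

theorem isEmpty_embedding_explode_of_neighborSet_eq [Finite V] (huv : F.Adj u v)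
    (htwin : (F.deleteEdges {s(u, v)}).neighborSet u = (F.deleteEdges {s(u, v)}).neighborSet v)
    (x y : ℕ) : IsEmpty (F ↪g explode F u v x y) :=
  ⟨fun f => ne_comap_of_neighborSet_eq (deleteEdges_le _) huv htwin
    (injOn_base.comp f.injective.injOn fun _ hp => hp)
    (eq_comap_base_comp_of_embedding_explode f)⟩

end Explode

/-- Every graph `H` with at least two vertices has a critical edge, or its complement
`Hᶜ` has one: an edge `{u,v}` such that no explosion along it contains an induced copy
of the respective graph. -/
theorem stmt17 {V : Type} [Fintype V] (H : SimpleGraph V) (h2 : 2 ≤ Fintype.card V) :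
    (∃ u v, H.Adj u v ∧ ∀ x y : ℕ,
        ¬ ∃ S : Set (ExplodedVertex V u v x y),
            Nonempty (((explode H u v x y).induce S) ≃g H)) ∨
    (∃ u v, Hᶜ.Adj u v ∧ ∀ x y : ℕ,
        ¬ ∃ S : Set (ExplodedVertex V u v x y),
            Nonempty (((explode Hᶜ u v x y).induce S) ≃g Hᶜ)) := by
  by_cases htwins : ∃ u v, H.Adj u v ∧
      (H.deleteEdges {s(u, v)}).neighborSet u = (H.deleteEdges {s(u, v)}).neighborSet v
  · obtain ⟨u, v, huv, htwin⟩ := htwins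
    refine .inl ⟨u, v, huv, fun x y ⟨S, ⟨e⟩⟩ => ?_⟩
    exact (isEmpty_embedding_explode_of_neighborSet_eq huv htwin x y).false
      ((Embedding.induce S).comp e.symm.toEmbedding)
  · push Not at htwins
    have hF := injective_neighborSet_compl htwins
    have : Nontrivial V := Fintype.one_lt_card_iff_nontrivial.mp h2
    obtain ⟨u, v, huv⟩ := exists_adj_of_injective_neighborSet hF
    refine .inr ⟨u, v, huv, fun x y ⟨S, ⟨e⟩⟩ => ?_⟩
    exact (isEmpty_embedding_explode_of_injective_neighborSet huv hF x y).false
      ((Embedding.induce S).comp e.symm.toEmbedding)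
end

section
/- Let Φ be a hereditary graph property (closed under taking induced subgraphs) with set Γ(Φ) of forbidden induced subgraphs, let H ∈ Γ(Φ) be a graph on k vertices, and let {u,v} ∈ E(H) be such that for all nonnegative integers x, y the exploded graph H^{x,y}_{u,v} satisfies Φ. Let G be a bipartite graph with vertex bipartition U ∪̇ V, where |U| = n₁ ≥ 1 and |V| = n₂ ≥ 1, and edge set E. Let Ĝ be the graph obtained from the exploded graph H^{n₁,n₂}_{u,v} by identifying the n₁ copies of u with the vertices of U, identifying the n₂ copies of v with the vertices of V, and adding all edges of E. Set R = V(H) ∖ {u,v} and r = |R| = k − 2. Then for any positive integer k⁰ ≤ min(n₁+n₂, |V(G)|), the number of vertex subsets S of Ĝ of size k⁰ + r with R ⊆ S and Ĝ[S] satisfying Φ equals the number of independent sets of size k⁰ in G; that is, #{S ⊆ V(Ĝ) : |S| = k⁰ + r, R ⊆ S, Φ(Ĝ[S]) = 1} equals the number of k⁰-element subsets of U ∪ V that are pairwise nonadjacent in G. -/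
open SimpleGraph

/-- `Φ` is hereditary: closed under taking induced subgraphs (graph embeddings). -/
def Hereditary (Φ : GraphProperty) : Prop :=
  ∀ (n m : ℕ) (G : SimpleGraph (Fin n)) (H' : SimpleGraph (Fin m)),
    Φ n G → Nonempty (H' ↪g G) → Φ m H'

/-- The bipartite graph on `Fin n₁ ⊕ Fin n₂` with edges between the two parts given by
the relation `Eadj`. -/
def bipGraph {n₁ n₂ : ℕ} (Eadj : Fin n₁ → Fin n₂ → Prop) :
    SimpleGraph (Fin n₁ ⊕ Fin n₂) :=
  SimpleGraph.fromRel fun p q =>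
    match p, q with
    | Sum.inl i, Sum.inr j => Eadj i j
    | _, _ => False

/-- The graph `Ĝ`: the exploded graph `H^{n₁,n₂}_{u,v}` whose `u`-copies are identified
with the part `U = Fin n₁` and whose `v`-copies are identified with the part
`V = Fin n₂` of the bipartite graph `G`, with the edges of `G` added. -/
def hatG {k : ℕ} (H : SimpleGraph (Fin k)) (u v : Fin k) {n₁ n₂ : ℕ}
    (Eadj : Fin n₁ → Fin n₂ → Prop) :
    SimpleGraph (ExplodedVertex (Fin k) u v n₁ n₂) :=
  explode H u v n₁ n₂ ⊔ (bipGraph Eadj).map (Function.Embedding.inr)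

lemma cardR_aux {k : ℕ} {u v : Fin k} (huv : u ≠ v) :
    Fintype.card {w : Fin k // w ≠ u ∧ w ≠ v} = k - 2 := by
  rw [Fintype.card_subtype]
  have h : Finset.univ.filter (fun w => w ≠ u ∧ w ≠ v) = Finset.univ \ {u, v} := by
    ext w; simp [not_or, and_comm]
  rw [h, Finset.card_sdiff_of_subset (Finset.subset_univ _), Finset.card_pair huv,
    Finset.card_univ, Fintype.card_fin]

lemma key_aux {k : ℕ} {H : SimpleGraph (Fin k)} {u v : Fin k} (Φ : GraphProperty)
    (hher : Hereditary Φ) (huv : H.Adj u v)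
    (hforb : ∀ (n : ℕ) (G : SimpleGraph (Fin n)),
      (∃ S : Set (Fin n), Nonempty ((G.induce S) ≃g H)) → ¬ Φ n G)
    (hexp : ∀ (x y N : ℕ) (e : Fin N ≃ ExplodedVertex (Fin k) u v x y),
      Φ N ((explode H u v x y).comap e))
    {n₁ n₂ : ℕ} (Eadj : Fin n₁ → Fin n₂ → Prop) (k₀ : ℕ)
    (S : Finset (ExplodedVertex (Fin k) u v n₁ n₂))
    (hcard : S.card = k₀ + (k - 2))
    (hR : ∀ a : {w : Fin k // w ≠ u ∧ w ≠ v}, Sum.inl a ∈ S) :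
    (∃ e : Fin (k₀ + (k - 2)) ≃ (S : Set (ExplodedVertex (Fin k) u v n₁ n₂)),
       Φ (k₀ + (k - 2))
         (((hatG H u v Eadj).induce
           (S : Set (ExplodedVertex (Fin k) u v n₁ n₂))).comap e)) ↔
    (∀ a ∈ S.toRight, ∀ b ∈ S.toRight, ¬ (bipGraph Eadj).Adj a b) := by
  have hne : u ≠ v := huv.ne
  constructor
  · rintro ⟨e, hPhi⟩ a ha b hb hadj
    rw [Finset.mem_toRight] at ha hb
    have hex : ∃ i j, Eadj i j ∧ Sum.inr (Sum.inl i) ∈ S ∧ Sum.inr (Sum.inr j) ∈ S := by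
      rw [bipGraph, SimpleGraph.fromRel_adj] at hadj
      obtain ⟨-, h | h⟩ := hadj
      · rcases a with i | j <;> rcases b with i' | j'
        · exact h.elim
        · exact ⟨i, j', h, ha, hb⟩
        · exact h.elim
        · exact h.elim
      · rcases a with i | j <;> rcases b with i' | j'
        · exact h.elim
        · exact h.elim
        · exact ⟨i', j, h, hb, ha⟩
        · exact h.elim
    obtain ⟨i, j, hEij, hiS, hjS⟩ := hex
    set fd : Fin k → ExplodedVertex (Fin k) u v n₁ n₂ := fun w =>
      if h1 : w = u then Sum.inr (Sum.inl i) else if h2 : w = v then Sum.inr (Sum.inr j)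
      else Sum.inl ⟨w, h1, h2⟩ with hfd
    have fdu : fd u = Sum.inr (Sum.inl i) := by simp [hfd]
    have fdv : fd v = Sum.inr (Sum.inr j) := by simp [hfd, hne.symm]
    have fdw : ∀ (w : Fin k) (hw1 : w ≠ u) (hw2 : w ≠ v), fd w = Sum.inl ⟨w, hw1, hw2⟩ := by
      intro w hw1 hw2; simp [hfd, hw1, hw2]
    have tri : ∀ w : Fin k, w = u ∨ w = v ∨ (w ≠ u ∧ w ≠ v) := by
      intro w
      by_cases hw1 : w = u
      · exact Or.inl hw1
      · by_cases hw2 : w = v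
        · exact Or.inr (Or.inl hw2)
        · exact Or.inr (Or.inr ⟨hw1, hw2⟩)
    have hfdS : ∀ w, fd w ∈ (S : Set (ExplodedVertex (Fin k) u v n₁ n₂)) := by
      intro w
      rcases tri w with h1 | h1 | ⟨h1, h1'⟩
      · subst h1; rw [fdu]; exact hiS
      · subst h1; rw [fdv]; exact hjS
      · rw [fdw w h1 h1']; exact hR ⟨w, h1, h1'⟩
    have hxadj : ∀ p q, (explode H u v n₁ n₂).Adj p q ↔
        p ≠ q ∧ (explodeRel H u v n₁ n₂ p q ∨ explodeRel H u v n₁ n₂ q p) :=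
      fun p q => SimpleGraph.fromRel_adj _ _ _
    have hbnotl : ∀ (a : {w : Fin k // w ≠ u ∧ w ≠ v}) (x : ExplodedVertex (Fin k) u v n₁ n₂),
        ¬ ((bipGraph Eadj).map Function.Embedding.inr).Adj (Sum.inl a) x := by
      intro a x h
      rw [SimpleGraph.map_adj] at h
      obtain ⟨p, q, -, hp, -⟩ := h
      exact Sum.inr_ne_inl hp
    have hbnotr : ∀ (a : {w : Fin k // w ≠ u ∧ w ≠ v}) (x : ExplodedVertex (Fin k) u v n₁ n₂),
        ¬ ((bipGraph Eadj).map Function.Embedding.inr).Adj x (Sum.inl a) := by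
      intro a x h
      rw [SimpleGraph.map_adj] at h
      obtain ⟨p, q, -, -, hq⟩ := h
      exact Sum.inr_ne_inl hq
    have hb_uv : ((bipGraph Eadj).map Function.Embedding.inr).Adj
        (Sum.inr (Sum.inl i) : ExplodedVertex (Fin k) u v n₁ n₂) (Sum.inr (Sum.inr j)) := by
      rw [SimpleGraph.map_adj]
      exact ⟨Sum.inl i, Sum.inr j, ⟨by simp, Or.inl hEij⟩, rfl, rfl⟩
    have hsup : ∀ p q, (hatG H u v Eadj).Adj p q ↔
        (explode H u v n₁ n₂).Adj p q ∨
          ((bipGraph Eadj).map Function.Embedding.inr).Adj p q := by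
      intro p q; rw [hatG, SimpleGraph.sup_adj]
    have hadj_iff : ∀ w₁ w₂, (hatG H u v Eadj).Adj (fd w₁) (fd w₂) ↔ H.Adj w₁ w₂ := by
      intro w₁ w₂
      rcases tri w₁ with h1 | h1 | ⟨h1, h1'⟩ <;>
        rcases tri w₂ with h2 | h2 | ⟨h2, h2'⟩
      -- w₁ = u
      · rw [h1, h2]
        exact iff_of_false ((hatG H u v Eadj).irrefl) H.irrefl
      · rw [h1, h2, fdu, fdv]
        exact iff_of_true ((hsup _ _).mpr (Or.inr hb_uv)) huv
      · rw [h1, fdu, fdw w₂ h2 h2', hsup]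
        constructor
        · rintro (h | h)
          · obtain ⟨-, h | h⟩ := (hxadj _ _).mp h
            · exact h.elim
            · exact h.symm
          · exact absurd h (hbnotr _ _)
        · intro h
          exact Or.inl ((hxadj _ _).mpr ⟨by simp, Or.inr h.symm⟩)
      -- w₁ = v
      · rw [h1, h2, fdv, fdu]
        exact iff_of_true (((hsup _ _).mpr (Or.inr hb_uv)).symm) huv.symm
      · rw [h1, h2]
        exact iff_of_false ((hatG H u v Eadj).irrefl) H.irrefl
      · rw [h1, fdv, fdw w₂ h2 h2', hsup]
        constructor
        · rintro (h | h)
          · obtain ⟨-, h | h⟩ := (hxadj _ _).mp h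
            · exact h.elim
            · exact h.symm
          · exact absurd h (hbnotr _ _)
        · intro h
          exact Or.inl ((hxadj _ _).mpr ⟨by simp, Or.inr h.symm⟩)
      -- w₁ generic
      · rw [h2, fdu, fdw w₁ h1 h1', hsup]
        constructor
        · rintro (h | h)
          · obtain ⟨-, h | h⟩ := (hxadj _ _).mp h
            · exact h
            · exact h.elim
          · exact absurd h (hbnotl _ _)
        · intro h
          exact Or.inl ((hxadj _ _).mpr ⟨by simp, Or.inl h⟩)
      · rw [h2, fdv, fdw w₁ h1 h1', hsup]
        constructor
        · rintro (h | h)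
          · obtain ⟨-, h | h⟩ := (hxadj _ _).mp h
            · exact h
            · exact h.elim
          · exact absurd h (hbnotl _ _)
        · intro h
          exact Or.inl ((hxadj _ _).mpr ⟨by simp, Or.inl h⟩)
      · rw [fdw w₁ h1 h1', fdw w₂ h2 h2', hsup]
        constructor
        · rintro (h | h)
          · obtain ⟨-, h | h⟩ := (hxadj _ _).mp h
            · exact h
            · exact h.symm
          · exact absurd h (hbnotl _ _)
        · intro h
          exact Or.inl ((hxadj _ _).mpr ⟨by simpa using h.ne, Or.inl h⟩)
    have hfdinj : Function.Injective fd := by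
      intro w₁ w₂ h
      rcases tri w₁ with h1 | h1 | ⟨h1, h1'⟩ <;>
        rcases tri w₂ with h2 | h2 | ⟨h2, h2'⟩
      · exact h1.trans h2.symm
      · rw [h1, h2, fdu, fdv] at h
        simp at h
      · rw [h1, fdu, fdw w₂ h2 h2'] at h
        exact (Sum.inr_ne_inl h).elim
      · rw [h1, h2, fdv, fdu] at h
        simp at h
      · exact h1.trans h2.symm
      · rw [h1, fdv, fdw w₂ h2 h2'] at h
        exact (Sum.inr_ne_inl h).elim
      · rw [h2, fdu, fdw w₁ h1 h1'] at h
        exact (Sum.inl_ne_inr h).elim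
      · rw [h2, fdv, fdw w₁ h1 h1'] at h
        exact (Sum.inl_ne_inr h).elim
      · rw [fdw w₁ h1 h1', fdw w₂ h2 h2'] at h
        simpa using h
    set g : Fin k → Fin (k₀ + (k - 2)) := fun w => e.symm ⟨fd w, hfdS w⟩ with hg
    have hginj : Function.Injective g := by
      intro w₁ w₂ h
      have h2 := e.symm.injective h
      exact hfdinj (congrArg Subtype.val h2)
    refine hforb _ _ ⟨Set.range g, ⟨SimpleGraph.Iso.symm ⟨Equiv.ofInjective g hginj, ?_⟩⟩⟩ hPhi
    intro a b
    show ((hatG H u v Eadj).induce _).Adj (e (g a)) (e (g b)) ↔ H.Adj a b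
    simp only [hg, Equiv.apply_symm_apply, SimpleGraph.comap_adj,
      Function.Embedding.coe_subtype]
    exact hadj_iff a b
  · intro hindep
    have hScard : Fintype.card (S : Set (ExplodedVertex (Fin k) u v n₁ n₂))
        = k₀ + (k - 2) := by
      simpa using hcard
    refine ⟨(Fintype.equivFinOfCardEq hScard).symm, ?_⟩
    set e := (Fintype.equivFinOfCardEq hScard).symm with he
    set N₀ := Fintype.card (ExplodedVertex (Fin k) u v n₁ n₂) with hN₀
    set e₀ : Fin N₀ ≃ ExplodedVertex (Fin k) u v n₁ n₂ := (Fintype.equivFin _).symm with he₀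
    refine hher N₀ _ _ _ (hexp n₁ n₂ N₀ e₀) ⟨⟨⟨fun a => e₀.symm ((e a).1), ?_⟩, ?_⟩⟩
    · intro a b h
      exact e.injective (Subtype.ext (e₀.symm.injective h))
    · intro a b
      simp only [SimpleGraph.comap_adj, Equiv.apply_symm_apply, Function.Embedding.coeFn_mk,
        Function.Embedding.coe_subtype, hatG, SimpleGraph.sup_adj, SimpleGraph.map_adj]
      constructor
      · exact fun h => Or.inl (by convert h using 2 <;> exact (e₀.apply_symm_apply _).symm)
      · rintro (h | ⟨p, q, hpq, hp, hq⟩)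
        · convert h using 2 <;> exact e₀.apply_symm_apply _
        · exfalso
          have hpS : p ∈ S.toRight := by
            rw [Finset.mem_toRight]
            have h2 := (e a).2
            rw [← hp] at h2
            exact h2
          have hqS : q ∈ S.toRight := by
            rw [Finset.mem_toRight]
            have h2 := (e b).2
            rw [← hq] at h2
            exact h2
          exact hindep p hpS q hqS hpq

/-- The reduction identity: for a hereditary property `Φ`, a forbidden graph `H ∈ Γ(Φ)`
on `k` vertices with an edge `{u,v}` all of whose explosions satisfy `Φ`, and a bipartite
graph `G` with parts of sizes `n₁, n₂ ≥ 1`, the number of `(k₀ + r)`-element vertex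
subsets `S` of `Ĝ` containing `R = V(H) ∖ {u,v}` (where `r = k − 2`) whose induced
subgraph satisfies `Φ` equals the number of independent sets of size `k₀` in `G`. -/
theorem stmt19 (Φ : GraphProperty) (hΦ : Invariant Φ) (hher : Hereditary Φ)
    (k : ℕ) (H : SimpleGraph (Fin k)) (u v : Fin k) (huv : H.Adj u v)
    (hforb : ∀ (n : ℕ) (G : SimpleGraph (Fin n)),
      (∃ S : Set (Fin n), Nonempty ((G.induce S) ≃g H)) → ¬ Φ n G)
    (hexp : ∀ (x y N : ℕ) (e : Fin N ≃ ExplodedVertex (Fin k) u v x y),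
      Φ N ((explode H u v x y).comap e))
    (n₁ n₂ : ℕ) (hn₁ : 0 < n₁) (hn₂ : 0 < n₂)
    (Eadj : Fin n₁ → Fin n₂ → Prop)
    (k₀ : ℕ) (hk₀ : 0 < k₀) (hk₀le : k₀ ≤ n₁ + n₂) :
    Nat.card {S : Finset (ExplodedVertex (Fin k) u v n₁ n₂) //
        S.card = k₀ + (k - 2) ∧
        (∀ a : {w : Fin k // w ≠ u ∧ w ≠ v}, Sum.inl a ∈ S) ∧
        ∃ e : Fin (k₀ + (k - 2)) ≃ (S : Set (ExplodedVertex (Fin k) u v n₁ n₂)),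
          Φ (k₀ + (k - 2))
            (((hatG H u v Eadj).induce
              (S : Set (ExplodedVertex (Fin k) u v n₁ n₂))).comap e)} =
      Nat.card {S : Finset (Fin n₁ ⊕ Fin n₂) //
        S.card = k₀ ∧ ∀ a ∈ S, ∀ b ∈ S, ¬ (bipGraph Eadj).Adj a b} := by
  have hne : u ≠ v := huv.ne
  have hcardR : Fintype.card {w : Fin k // w ≠ u ∧ w ≠ v} = k - 2 := cardR_aux hne
  have toLeft_univ : ∀ (S : Finset (ExplodedVertex (Fin k) u v n₁ n₂)),
      (∀ a : {w : Fin k // w ≠ u ∧ w ≠ v}, Sum.inl a ∈ S) → S.toLeft = Finset.univ := by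
    intro S h; ext a; simp [h a]
  refine Nat.card_congr (Equiv.mk
    (fun S => ⟨S.1.toRight, ?_, ?_⟩)
    (fun T => ⟨Finset.univ.disjSum T.1, ?_, ?_, ?_⟩) ?_ ?_)
  · have h2 := S.2.2.1
    have hc := Finset.card_toLeft_add_card_toRight (u := S.1)
    rw [toLeft_univ S.1 h2, Finset.card_univ, hcardR, S.2.1] at hc
    omega
  · exact (key_aux Φ hher huv hforb hexp Eadj k₀ S.1 S.2.1 S.2.2.1).mp S.2.2.2
  · rw [Finset.card_disjSum, Finset.card_univ, hcardR, T.2.1]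
    omega
  · intro a; simp
  · refine (key_aux Φ hher huv hforb hexp Eadj k₀ _ ?_ ?_).mpr ?_
    · rw [Finset.card_disjSum, Finset.card_univ, hcardR, T.2.1]
      omega
    · intro a; simp
    · simpa [Finset.toRight_disjSum] using T.2.2
  · intro S
    apply Subtype.ext
    conv_rhs => rw [← Finset.toLeft_disjSum_toRight (u := S.1)]
    rw [toLeft_univ S.1 S.2.2.1]
  · intro T
    apply Subtype.ext
    exact Finset.toRight_disjSum
end
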